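/- arXiv:1112.0284 — 10 statements merged into one kernel-verified Lean document; each statement's English description precedes it below -/
import Mathlib

section
/- Let (V,g) be a pseudo-Euclidean space of dimension 2m which is the direct sum V = V₊ ⊕ V₋ of two totally isotropic subspaces (each then of dimension m). Let c be a nonzero real number, let B be the endomorphism of V equal to c·Id on V₊ and to −c·Id on V₋ (such B is g-skew-adjoint), let u ∈ V with u ∉ V₋, and define v : V → V by v(x) = Bx + cx + 2·g(u,x)·x − g(x,x)·u. Then: (1) ker Dv_0 = V₋, which has dimension m; (2) every x ∈ V₋ with g(u,x) = 0 satisfies v(x) = 0; and (3) for every nonzero x ∈ V₋ with g(u,x) = 0 one has ker Dv_x = {y ∈ V₋ : g(u,y) = 0}, which has dimension m − 1. In particular, the dimension of ker Dv_x is not constant on the zero set of v near 0. -/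
/-!
At the origin `Dv₀ = B + c = 2c·π`, where `π` is the projection onto `V₊` along `V₋`, so its
kernel is `V₋`; isotropy of both summands forces `dim V₊ = dim V₋ = m`. At a zero `x ∈ V₋` with
`g(u,x) = 0` the derivative is `Dv_x y = 2c·π y + 2g(u,y)·x − 2g(x,y)·u`. Pairing with `x` kills
everything but `2c·g(x,y)`, so `g(x,y) = 0`, and then `V₊ ∩ V₋ = 0` splits the rest into
`π y = 0` and `g(u,y) = 0`. Finally `V₋` is maximal isotropic, hence `V₋^⊥ = V₋ ∌ u`, so
`g(u,·)` does not vanish on `V₋` and cuts its dimension down by exactly one.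
-/

open Module LinearMap

namespace LinearMap.BilinForm

variable {K V : Type*} [Field K] [AddCommGroup V] [Module K V] {g : LinearMap.BilinForm K V}
  {W : Submodule K V}

lemma le_orthogonal_of_isotropic (hW : ∀ x ∈ W, ∀ y ∈ W, g x y = 0) : W ≤ g.orthogonal W :=
  fun y hy x hx => hW x hx y hy

variable [FiniteDimensional K V]

lemma two_mul_finrank_le_of_isotropic (hg : g.Nondegenerate)
    (hW : ∀ x ∈ W, ∀ y ∈ W, g x y = 0) : 2 * finrank K W ≤ finrank K V := by
  have hle := Submodule.finrank_mono (le_orthogonal_of_isotropic hW)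
  have hW_le : finrank K W ≤ finrank K V := Submodule.finrank_le W
  rw [finrank_orthogonal hg] at hle
  omega

lemma two_mul_finrank_eq_of_isCompl_of_isotropic (hg : g.Nondegenerate) {W' : Submodule K V}
    (hcompl : IsCompl W W') (hW : ∀ x ∈ W, ∀ y ∈ W, g x y = 0)
    (hW' : ∀ x ∈ W', ∀ y ∈ W', g x y = 0) : 2 * finrank K W = finrank K V := by
  have := Submodule.finrank_add_eq_of_isCompl hcompl
  have := two_mul_finrank_le_of_isotropic hg hW
  have := two_mul_finrank_le_of_isotropic hg hW'
  omega

lemma orthogonal_eq_self_of_isotropic (hg : g.Nondegenerate)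
    (hW : ∀ x ∈ W, ∀ y ∈ W, g x y = 0) (hdim : 2 * finrank K W = finrank K V) :
    g.orthogonal W = W := by
  refine (Submodule.eq_of_le_of_finrank_eq (le_orthogonal_of_isotropic hW) ?_).symm
  rw [finrank_orthogonal hg]
  omega

end LinearMap.BilinForm

lemma Submodule.finrank_inf_ker_add_one {K V : Type*} [Field K] [AddCommGroup V] [Module K V]
    [FiniteDimensional K V] {W : Submodule K V} {f : Dual K V} {w : V} (hw : w ∈ W)
    (hfw : f w ≠ 0) : finrank K (W ⊓ ker f : Submodule K V) + 1 = finrank K W := by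
  have hf : f.domRestrict W ≠ 0 := fun h => hfw (LinearMap.congr_fun h ⟨w, hw⟩)
  rw [← Dual.finrank_ker_add_one_of_ne_zero hf, ker_domRestrict, ← Submodule.map_comap_subtype,
    Submodule.finrank_map_subtype_eq]

section Splitting

variable {V : Type*} [AddCommGroup V] [Module ℝ V] {Vp Vm : Submodule ℝ V}
  (hcompl : IsCompl Vp Vm) {c : ℝ} {B : V →ₗ[ℝ] V}

lemma apply_projection_eq_of_isotropic (g : V →ₗ[ℝ] V →ₗ[ℝ] ℝ)
    (hVm_iso : ∀ x ∈ Vm, ∀ y ∈ Vm, g x y = 0) {x : V} (hx : x ∈ Vm) (y : V) :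
    g x (Vp.projection Vm hcompl y) = g x y := by
  conv_rhs => rw [← Submodule.projection_add_projection_eq_self hcompl y]
  rw [map_add, hVm_iso x hx _ (Submodule.projection_apply_mem _ _), add_zero]

variable (hBp : ∀ x ∈ Vp, B x = c • x) (hBm : ∀ x ∈ Vm, B x = -c • x)
include hcompl hBp hBm

lemma apply_add_smul_eq_smul_projection (y : V) :
    B y + c • y = (2 * c) • Vp.projection Vm hcompl y := by
  set p := Vp.projection Vm hcompl y
  set q := Vm.projection Vp hcompl.symm y
  have hy : y = p + q := (Submodule.projection_add_projection_eq_self hcompl y).symm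
  rw [hy, map_add, hBp p (Submodule.projection_apply_mem _ _),
    hBm q (Submodule.projection_apply_mem _ _)]
  module

lemma apply_add_smul_eq_zero_iff (hc : c ≠ 0) {y : V} : B y + c • y = 0 ↔ y ∈ Vm := by
  rw [apply_add_smul_eq_smul_projection hcompl hBp hBm, smul_eq_zero,
    or_iff_right (mul_ne_zero two_ne_zero hc), Submodule.projection_apply_eq_zero_iff]

lemma apply_add_smul_add_sub_eq_zero_iff (hc : c ≠ 0) (g : V →ₗ[ℝ] V →ₗ[ℝ] ℝ)
    (hVm_iso : ∀ x ∈ Vm, ∀ y ∈ Vm, g x y = 0) {u x : V} (hx : x ∈ Vm) (hx0 : x ≠ 0)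
    (hxu : g x u = 0) {y : V} :
    B y + c • y + (2 * g u y) • x - (2 * g x y) • u = 0 ↔ y ∈ Vm ∧ g u y = 0 := by
  have h2c : 2 * c ≠ 0 := mul_ne_zero two_ne_zero hc
  rw [apply_add_smul_eq_smul_projection hcompl hBp hBm]
  constructor
  · intro h
    have hxy : g x y = 0 := by
      have hpair := congrArg (g x) h
      simp only [map_sub, map_add, map_smul, smul_eq_mul, hVm_iso x hx x hx, hxu,
        apply_projection_eq_of_isotropic hcompl g hVm_iso hx, mul_zero, add_zero,
        sub_zero, map_zero] at hpair
      exact (mul_eq_zero.1 hpair).resolve_left h2c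
    rw [hxy, mul_zero, zero_smul, sub_zero] at h
    obtain ⟨hp, hux⟩ := Submodule.disjoint_iff_add_eq_zero.1 hcompl.disjoint
      (Submodule.smul_mem _ _ (Submodule.projection_apply_mem _ _)) (Submodule.smul_mem _ _ hx) h
    rw [smul_eq_zero, or_iff_right h2c, Submodule.projection_apply_eq_zero_iff] at hp
    rw [smul_eq_zero, or_iff_left hx0, mul_eq_zero, or_iff_right two_ne_zero] at hux
    exact ⟨hp, hux⟩
  · rintro ⟨hy, huy⟩
    rw [Submodule.projection_apply_of_mem_right hcompl hy, huy, hVm_iso x hx y hy]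
    simp

end Splitting

lemma fderiv_linear_add_quadratic_apply {V : Type*} [NormedAddCommGroup V] [NormedSpace ℝ V]
    [FiniteDimensional ℝ V] (g : V →ₗ[ℝ] V →ₗ[ℝ] ℝ) (c : ℝ) (B : V →ₗ[ℝ] V) (u x y : V) :
    fderiv ℝ (fun z => B z + c • z + (2 * g u z) • z - g z z • u) x y =
      B y + c • y + (2 * g u x) • y + (2 * g u y) • x - (g x y + g y x) • u := by
  let G : V →L[ℝ] V →L[ℝ] ℝ :=
    LinearMap.toContinuousLinearMap (LinearMap.toContinuousLinearMap.toLinearMap ∘ₗ g)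
  have hquad : HasFDerivAt (fun z => G z z) _ x :=
    G.hasFDerivAt_of_bilinear (hasFDerivAt_id x) (hasFDerivAt_id x)
  have hlin : HasFDerivAt (fun z => g u z) (LinearMap.toContinuousLinearMap (g u)) x :=
    (LinearMap.toContinuousLinearMap (g u)).hasFDerivAt
  have hB : HasFDerivAt (fun z => B z) (LinearMap.toContinuousLinearMap B) x :=
    (LinearMap.toContinuousLinearMap B).hasFDerivAt
  have h : HasFDerivAt (fun z => B z + c • z + (2 * g u z) • z - g z z • u) _ x :=
    ((hB.add ((hasFDerivAt_id x).const_smul c)).add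
      ((hlin.const_mul 2).smul (hasFDerivAt_id x))).sub (hquad.smul_const u)
  rw [h.fderiv]
  simp [G]
  module

/-- On a pseudo-Euclidean space `(V,g)` of dimension `2m` split as a
direct sum of totally isotropic subspaces `V₊ ⊕ V₋`, with `B = c·Id` on `V₊`,
`B = −c·Id` on `V₋` (`c ≠ 0`), `u ∉ V₋`, and
`v x = B x + c • x + 2 g(u,x) • x − g(x,x) • u`, one has:
(1) `ker Dv₀ = V₋`, of dimension `m`;
(2) every `x ∈ V₋` with `g(u,x) = 0` is a zero of `v`;
(3) for every nonzero `x ∈ V₋` with `g(u,x) = 0`,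
`ker Dv_x = {y ∈ V₋ : g(u,y) = 0}`, of dimension `m − 1`. -/
theorem stmt1
    {V : Type*} [NormedAddCommGroup V] [NormedSpace ℝ V] [FiniteDimensional ℝ V]
    (g : V →ₗ[ℝ] V →ₗ[ℝ] ℝ)
    (hg_symm : ∀ x y : V, g x y = g y x)
    (hg_nondeg : ∀ x : V, (∀ y : V, g x y = 0) → x = 0)
    (m : ℕ) (hdim : Module.finrank ℝ V = 2 * m)
    (Vp Vm : Submodule ℝ V) (hcompl : IsCompl Vp Vm)
    (hVp_iso : ∀ x ∈ Vp, ∀ y ∈ Vp, g x y = 0)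
    (hVm_iso : ∀ x ∈ Vm, ∀ y ∈ Vm, g x y = 0)
    (c : ℝ) (hc : c ≠ 0)
    (B : V →ₗ[ℝ] V)
    (hBp : ∀ x ∈ Vp, B x = c • x)
    (hBm : ∀ x ∈ Vm, B x = -c • x)
    (u : V) (hu : u ∉ Vm)
    (v : V → V)
    (hv : ∀ x : V, v x = B x + c • x + (2 * g u x) • x - (g x x) • u) :
    (LinearMap.ker (fderiv ℝ v 0 : V →ₗ[ℝ] V) = Vm ∧ Module.finrank ℝ Vm = m) ∧
    (∀ x ∈ Vm, g u x = 0 → v x = 0) ∧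
    (∀ x ∈ Vm, x ≠ 0 → g u x = 0 →
      LinearMap.ker (fderiv ℝ v x : V →ₗ[ℝ] V) = Vm ⊓ LinearMap.ker (g u) ∧
      Module.finrank ℝ (Vm ⊓ LinearMap.ker (g u) : Submodule ℝ V) = m - 1) := by
  obtain rfl : v = fun x => B x + c • x + (2 * g u x) • x - g x x • u := funext hv
  have hnd : BilinForm.Nondegenerate g :=
    (IsRefl.nondegenerate_iff_separatingLeft fun x y h => (hg_symm y x).trans h).2
      hg_nondeg
  have hVm_dim : 2 * finrank ℝ Vm = finrank ℝ V :=
    BilinForm.two_mul_finrank_eq_of_isCompl_of_isotropic hnd hcompl.symm hVm_iso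
      hVp_iso
  have hVm_m : finrank ℝ Vm = m := by omega
  refine ⟨⟨?_, hVm_m⟩, fun x hx hux => ?_, fun x hx hx0 hux => ⟨?_, ?_⟩⟩
  · ext y
    simpa [fderiv_linear_add_quadratic_apply] using apply_add_smul_eq_zero_iff hcompl hBp hBm hc
  · simp [hBm x hx, hVm_iso x hx x hx, hux]
  · ext y
    rw [Submodule.mem_inf, LinearMap.mem_ker, LinearMap.mem_ker, ContinuousLinearMap.coe_coe,
      fderiv_linear_add_quadratic_apply, hux, hg_symm y x, ← two_mul, mul_zero, zero_smul, add_zero]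
    exact apply_add_smul_add_sub_eq_zero_iff hcompl hBp hBm hc g hVm_iso hx hx0
      ((hg_symm x u).trans hux)
  · obtain ⟨w, hw, hw0⟩ : ∃ w ∈ Vm, g u w ≠ 0 := by
      have hu' : u ∉ BilinForm.orthogonal g Vm := by
        rwa [BilinForm.orthogonal_eq_self_of_isotropic hnd hVm_iso hVm_dim]
      simpa [BilinForm.mem_orthogonal_iff, hg_symm _ u] using hu'
    have := Submodule.finrank_inf_ker_add_one hw hw0
    omega
end

section
/- Let (V,g) be a pseudo-Euclidean space, let L be a g-skew-adjoint endomorphism of V, and let p ∈ V with p ∉ L(V). Set H = ker L ∩ {x ∈ V : g(p,x) = 0}. Then H^⊥ = L(V) ⊕ ℝ·p; that is, H^⊥ = L(V) + span{p} and L(V) ∩ span{p} = {0}. -/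
/-!
The `g`-orthogonal complement of `L(V) + ℝ·p` is `ker L ∩ p^⊥`: skew-adjointness turns
`g(Lx, m) = 0` for all `x` into `g(x, Lm) = 0` for all `x`, i.e. `Lm = 0`. Since `g` is
nondegenerate and `V` is finite-dimensional, taking orthogonal complements again gives
`H^⊥ = L(V) + ℝ·p`.
-/

namespace LinearMap.BilinForm

variable {R M : Type*} [CommRing R] [AddCommGroup M] [Module R M] (B : LinearMap.BilinForm R M)

theorem orthogonal_sup (N N' : Submodule R M) :
    B.orthogonal (N ⊔ N') = B.orthogonal N ⊓ B.orthogonal N' := by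
  refine le_antisymm (le_inf (orthogonal_le le_sup_left) (orthogonal_le le_sup_right)) ?_
  rintro m ⟨hN, hN'⟩ n hn
  obtain ⟨a, ha, b, hb, rfl⟩ := Submodule.mem_sup.1 hn
  simp [hN a ha, hN' b hb]

theorem orthogonal_span_singleton (x : M) : B.orthogonal (R ∙ x) = LinearMap.ker (B x) := by
  ext m
  simp only [mem_orthogonal_iff, Submodule.mem_span_singleton, forall_exists_index,
    forall_apply_eq_imp_iff, map_smul, LinearMap.smul_apply, smul_eq_mul, LinearMap.mem_ker]
  exact ⟨fun h => by simpa using h 1, fun h a => by rw [h, mul_zero]⟩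

theorem orthogonal_range_eq_ker_of_isSkewAdjoint (hB : B.SeparatingRight) {f : Module.End R M}
    (hf : B.IsSkewAdjoint f) : B.orthogonal (LinearMap.range f) = LinearMap.ker f := by
  ext m
  have hfm : (∀ x, B (f x) m = 0) ↔ ∀ x, B x (f m) = 0 := by
    simp only [hf _ m, Pi.neg_apply, map_neg, neg_eq_zero]
  simp only [mem_orthogonal_iff, LinearMap.mem_range, forall_exists_index,
    forall_apply_eq_imp_iff, hfm, LinearMap.mem_ker]
  exact ⟨hB _, fun h x => by rw [h, map_zero]⟩

end LinearMap.BilinForm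

/-- For a `g`-skew-adjoint endomorphism `L` of a pseudo-Euclidean
space `(V,g)` and `p ∉ L(V)`, setting `H = ker L ∩ ker g(p,·)`, one has
`H^⊥ = L(V) ⊕ ℝ·p`: the orthogonal complement of `H` is `L(V) + span{p}`,
and `L(V) ∩ span{p} = {0}`. -/
theorem stmt6
    {V : Type*} [AddCommGroup V] [Module ℝ V] [FiniteDimensional ℝ V]
    (g : V →ₗ[ℝ] V →ₗ[ℝ] ℝ)
    (hg_symm : ∀ x y : V, g x y = g y x)
    (hg_nondeg : ∀ x : V, (∀ y : V, g x y = 0) → x = 0)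
    (L : V →ₗ[ℝ] V)
    (hL_skew : ∀ x y : V, g (L x) y = - g x (L y))
    (p : V) (hp : p ∉ LinearMap.range L) :
    {x : V | ∀ w : V, L w = 0 → g p w = 0 → g w x = 0} =
      ((LinearMap.range L ⊔ Submodule.span ℝ {p} : Submodule ℝ V) : Set V) ∧
    LinearMap.range L ⊓ Submodule.span ℝ {p} = ⊥ := by
  have hrefl : g.IsRefl := (LinearMap.BilinForm.isSymm_def.2 hg_symm).isRefl
  have hnd : g.Nondegenerate := hrefl.nondegenerate_iff_separatingLeft.2 hg_nondeg
  have hskew : LinearMap.IsSkewAdjoint g L := fun x y => by simp [hL_skew]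
  have horth : LinearMap.BilinForm.orthogonal g (LinearMap.range L ⊔ ℝ ∙ p) =
      LinearMap.ker L ⊓ LinearMap.ker (g p) := by
    rw [LinearMap.BilinForm.orthogonal_sup,
      LinearMap.BilinForm.orthogonal_range_eq_ker_of_isSkewAdjoint g hnd.2 hskew,
      LinearMap.BilinForm.orthogonal_span_singleton]
  refine ⟨?_, disjoint_iff.1 (Submodule.disjoint_span_singleton_of_notMem hp)⟩
  rw [← LinearMap.BilinForm.orthogonal_orthogonal hnd hrefl (LinearMap.range L ⊔ ℝ ∙ p), horth]
  ext x
  simp [and_imp]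
end

section
/- Let V be a finite-dimensional real vector space, let b be a symmetric bilinear form on V, and let ξ : V → ℝ be a nonzero linear functional such that b(x,x) = 0 for every x ∈ ker ξ. Then there exists a linear functional μ : V → ℝ with 2·b(y,z) = μ(y)·ξ(z) + μ(z)·ξ(y) for all y, z ∈ V. -/
/-- If a symmetric bilinear form `b` on a finite-dimensional real
vector space vanishes on the kernel of a nonzero linear functional `ξ` (in the
sense `b(x,x) = 0` for `x ∈ ker ξ`), then `2 b = μ ⊙ ξ` for some linear
functional `μ`. -/
theorem stmt7
    {V : Type*} [AddCommGroup V] [Module ℝ V] [FiniteDimensional ℝ V]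
    (b : V →ₗ[ℝ] V →ₗ[ℝ] ℝ)
    (hb_symm : ∀ y z : V, b y z = b z y)
    (ξ : V →ₗ[ℝ] ℝ) (hξ : ξ ≠ 0)
    (h : ∀ x : V, ξ x = 0 → b x x = 0) :
    ∃ μ : V →ₗ[ℝ] ℝ, ∀ y z : V, 2 * b y z = μ y * ξ z + μ z * ξ y := by
  -- find e with ξ e = 1
  obtain ⟨v, hv⟩ : ∃ v, ξ v ≠ 0 := by
    by_contra hc
    push_neg at hc
    exact hξ (LinearMap.ext fun x => by simpa using hc x)
  set e := (ξ v)⁻¹ • v with he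
  have hξe : ξ e = 1 := by simp [he, inv_mul_cancel₀ hv]
  have h0 : ∀ u w : V, ξ u = 0 → ξ w = 0 → b u w = 0 := by
    intro u w hu hw
    have h1 := h u hu
    have h2 := h w hw
    have h3 := h (u + w) (by simp [hu, hw])
    have hs := hb_symm u w
    simp only [map_add, LinearMap.add_apply] at h3
    linarith
  refine ⟨(2 : ℝ) • b e - (b e e) • ξ, fun y z => ?_⟩
  have key := h0 (y - ξ y • e) (z - ξ z • e) (by simp [hξe]) (by simp [hξe])
  simp only [map_sub, map_smul, LinearMap.sub_apply, LinearMap.smul_apply,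
    smul_eq_mul, hξe, mul_one] at key ⊢
  have s1 := hb_symm y e
  have s2 := hb_symm z e
  linear_combination 2 * key + 2 * ξ z * s1
end

section
/- Let b be a symmetric bilinear form on a finite-dimensional real vector space V, and let u ∈ V satisfy b(u,u) = 0 and b(u,y) ≠ 0 for some y ∈ V (i.e. u ∉ rad(b)). Then the restriction of b to the hyperplane u^⊥ᵇ = {x ∈ V : b(u,x) = 0} has rank equal to rank(b) − 2. -/
/-!
The radical of `b` restricted to `W = u^⊥ᵇ` is `rad(b) ⊕ ℝu`: a vector `x ∈ W` orthogonal to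
all of `W` has `ker (b u) ≤ ker (b x)`, so `b x = c • b u` and `x - c • u ∈ rad(b)`; conversely
`rad(b) ⊆ W` by symmetry and `u ∈ W` because `u` is isotropic. As `u ∉ rad(b)`, the radical
grows by one while `W` is a hyperplane, so the rank drops by two.
-/

/-- The radical of a bilinear form, `{x | b(x,y) = 0 for all y}`, as the kernel
of `b` viewed as a map into the dual. -/
noncomputable def bilinRadical {V : Type*} [AddCommGroup V] [Module ℝ V]
    (b : V →ₗ[ℝ] V →ₗ[ℝ] ℝ) : Submodule ℝ V :=
  LinearMap.ker b

/-- The rank of a bilinear form: `dim V − dim rad(b)`. -/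
noncomputable def bilinRank (V : Type*) [AddCommGroup V] [Module ℝ V]
    (b : V →ₗ[ℝ] V →ₗ[ℝ] ℝ) : ℕ :=
  Module.finrank ℝ V - Module.finrank ℝ (bilinRadical b)

open Submodule

namespace LinearMap

variable {K V : Type*} [Field K] [AddCommGroup V] [Module K V]

theorem mem_ker_domRestrict₁₂_iff (b : V →ₗ[K] V →ₗ[K] K) (p q : Submodule K V) (x : p) :
    x ∈ ker (b.domRestrict₁₂ p q) ↔ ∀ y ∈ q, b x y = 0 := by
  simp only [mem_ker, LinearMap.ext_iff, domRestrict₁₂_apply, zero_apply, Subtype.forall]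

theorem ker_le_ker_apply_of_symm (b : V →ₗ[K] V →ₗ[K] K) (hb : ∀ x y, b x y = b y x) (u : V) :
    ker b ≤ ker (b u) := fun x hx => by
  rw [mem_ker, hb, mem_ker.mp hx, zero_apply]

theorem map_ker_domRestrict₁₂_ker_apply (b : V →ₗ[K] V →ₗ[K] K) (hb : ∀ x y, b x y = b y x)
    {u : V} (huu : b u u = 0) :
    (ker (b.domRestrict₁₂ (ker (b u)) (ker (b u)))).map (ker (b u)).subtype =
      ker b ⊔ K ∙ u := by
  apply le_antisymm
  · rintro _ ⟨x, hx, rfl⟩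
    rw [SetLike.mem_coe, mem_ker_domRestrict₁₂_iff] at hx
    have hker : ker (b u) ≤ ker (b x) := fun y hy => hx y hy
    have hspan : b x ∈ span K (Set.range fun _ : Unit => b u) :=
      mem_span_of_iInf_ker_le_ker (by simpa using hker)
    obtain ⟨c, hc⟩ := mem_span_singleton.mp (by simpa only [Set.range_const] using hspan)
    have hrad : (x : V) - c • u ∈ ker b := by
      rw [mem_ker, map_sub, map_smul, hc, sub_self]
    have hline : c • u ∈ K ∙ u := smul_mem _ c (mem_span_singleton_self u)
    simpa using add_mem (mem_sup_left hrad) (mem_sup_right hline)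
  · refine sup_le (fun x hx => ⟨⟨x, ker_le_ker_apply_of_symm b hb u hx⟩, ?_, rfl⟩) ?_
    · exact (mem_ker_domRestrict₁₂_iff _ _ _ _).mpr fun y _ => by rw [mem_ker.mp hx, zero_apply]
    · rw [span_le, Set.singleton_subset_iff]
      exact ⟨⟨u, huu⟩, (mem_ker_domRestrict₁₂_iff _ _ _ _).mpr fun y hy => hy, rfl⟩

end LinearMap

/-- If `b` is a symmetric bilinear form on a finite-dimensional
real vector space `V`, and `u ∈ V` satisfies `b(u,u) = 0` and `u ∉ rad(b)`,
then the restriction of `b` to the hyperplane `u^⊥ᵇ = {x | b(u,x) = 0}` has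
rank `rank(b) − 2`. -/
theorem stmt8
    {V : Type*} [AddCommGroup V] [Module ℝ V] [FiniteDimensional ℝ V]
    (b : V →ₗ[ℝ] V →ₗ[ℝ] ℝ)
    (hb_symm : ∀ y z : V, b y z = b z y)
    (u : V) (huu : b u u = 0) (hu : ∃ y : V, b u y ≠ 0) :
    bilinRank (LinearMap.ker (b u))
        (b.domRestrict₁₂ (LinearMap.ker (b u)) (LinearMap.ker (b u))) =
      bilinRank V b - 2 := by
  obtain ⟨y, hy⟩ := hu
  have hbu : b u ≠ 0 := fun h => hy (by rw [h, LinearMap.zero_apply])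
  have hu_rad : u ∉ LinearMap.ker b := fun h => hbu (LinearMap.mem_ker.mp h)
  have hW := Module.Dual.finrank_ker_add_one_of_ne_zero hbu
  have hrad : Module.finrank ℝ (LinearMap.ker (b.domRestrict₁₂ (LinearMap.ker (b u))
      (LinearMap.ker (b u)))) = Module.finrank ℝ (LinearMap.ker b) + 1 := by
    rw [← finrank_map_subtype_eq, LinearMap.map_ker_domRestrict₁₂_ker_apply b hb_symm huu,
      finrank_sup_span_singleton hu_rad]
  have hle := Submodule.finrank_le
    (LinearMap.ker (b.domRestrict₁₂ (LinearMap.ker (b u)) (LinearMap.ker (b u))))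
  unfold bilinRank bilinRadical
  omega
end

section
/- Let b be a symmetric bilinear form on a finite-dimensional real vector space V, and let u ∈ V satisfy b(u,u) = 0 and b(u,y) ≠ 0 for some y ∈ V (i.e. u ∉ rad(b)). Then the radical of the restriction of b to the hyperplane u^⊥ᵇ = {x ∈ V : b(u,x) = 0} equals rad(b) ⊕ ℝ·u; that is, {w ∈ u^⊥ᵇ : b(w,z) = 0 for all z ∈ u^⊥ᵇ} = rad(b) + span{u}, and this sum is direct since u ∉ rad(b). -/
/-!
A vector `w ∈ u^⊥` lies in the radical of `b|_{u^⊥}` exactly when the functional `b w` vanishes on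
`ker (b u)`, i.e. when `b w = c • b u = b (c • u)` for some scalar `c`, i.e. when
`w - c • u ∈ rad b`. Since `b u u = 0`, every `w` of this form automatically lies in `u^⊥`.
-/

open LinearMap Submodule

theorem LinearMap.ker_le_ker_iff_exists_smul_eq {K E : Type*} [Field K] [AddCommGroup E]
    [Module K E] {f g : E →ₗ[K] K} : ker f ≤ ker g ↔ ∃ c : K, c • f = g := by
  constructor
  · intro h
    have hg : g ∈ span K (Set.range fun _ : Unit => f) :=
      mem_span_of_iInf_ker_le_ker (by simpa using h)
    rwa [Set.range_const, mem_span_singleton] at hg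
  · rintro ⟨c, rfl⟩
    exact ker_le_ker_smul f c

theorem LinearMap.mem_ker_sup_span_singleton_iff {R M N : Type*} [CommRing R] [AddCommGroup M]
    [Module R M] [AddCommGroup N] [Module R N] (f : M →ₗ[R] N) {u w : M} :
    w ∈ ker f ⊔ R ∙ u ↔ ∃ c : R, c • f u = f w := by
  simp only [mem_sup, mem_ker, mem_span_singleton]
  constructor
  · rintro ⟨k, hk, _, ⟨c, rfl⟩, rfl⟩
    exact ⟨c, by simp [hk]⟩
  · rintro ⟨c, hc⟩
    exact ⟨w - c • u, by simp [hc], c • u, ⟨c, rfl⟩, sub_add_cancel w _⟩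

theorem LinearMap.mem_map_ker_domRestrict₁₂_iff {R M N P : Type*} [CommSemiring R]
    [AddCommMonoid M] [Module R M] [AddCommMonoid N] [Module R N] [AddCommMonoid P] [Module R P]
    (b : M →ₗ[R] N →ₗ[R] P) (p : Submodule R M) (q : Submodule R N) {w : M} :
    w ∈ (ker (b.domRestrict₁₂ p q)).map p.subtype ↔ w ∈ p ∧ q ≤ ker (b w) := by
  constructor
  · rintro ⟨w, hw, rfl⟩
    exact ⟨w.2, fun z hz => LinearMap.congr_fun hw ⟨z, hz⟩⟩
  · rintro ⟨hw, hq⟩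
    exact ⟨⟨w, hw⟩, LinearMap.ext fun z => hq z.2, rfl⟩

theorem stmt9_general
    {V : Type*} [AddCommGroup V] [Module ℝ V]
    (b : V →ₗ[ℝ] V →ₗ[ℝ] ℝ)
    (hb_symm : ∀ y z : V, b y z = b z y)
    (u : V) (huu : b u u = 0) (hu : ∃ y : V, b u y ≠ 0) :
    (LinearMap.ker
          (b.domRestrict₁₂ (LinearMap.ker (b u)) (LinearMap.ker (b u)))).map
        (LinearMap.ker (b u)).subtype =
      LinearMap.ker b ⊔ Submodule.span ℝ {u} ∧
    LinearMap.ker b ⊓ Submodule.span ℝ {u} = ⊥ := by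
  refine ⟨ext fun w => ?_, ?_⟩
  · rw [mem_map_ker_domRestrict₁₂_iff, ker_le_ker_iff_exists_smul_eq,
      mem_ker_sup_span_singleton_iff, and_iff_right_iff_imp]
    rintro ⟨c, hc⟩
    rw [mem_ker, hb_symm, ← hc, LinearMap.smul_apply, huu, smul_zero]
  · have hu_ker : u ∉ ker b := fun h => by simp [mem_ker.mp h] at hu
    exact (disjoint_span_singleton_of_notMem hu_ker).eq_bot

/-- If `b` is a symmetric bilinear form on a finite-dimensional
real vector space `V`, and `u ∈ V` satisfies `b(u,u) = 0` and `u ∉ rad(b)`,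
then the radical of the restriction of `b` to `u^⊥ᵇ = {x | b(u,x) = 0}` equals
`rad(b) ⊕ ℝ·u`: as submodules of `V`, the radical of `b|_{u^⊥ᵇ}` (pushed
forward along the inclusion) is `rad(b) + span{u}`, `u ∉ rad(b)`, and
`rad(b) ∩ span{u} = {0}`. -/
theorem stmt9
    {V : Type*} [AddCommGroup V] [Module ℝ V] [FiniteDimensional ℝ V]
    (b : V →ₗ[ℝ] V →ₗ[ℝ] ℝ)
    (hb_symm : ∀ y z : V, b y z = b z y)
    (u : V) (huu : b u u = 0) (hu : ∃ y : V, b u y ≠ 0) :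
    (LinearMap.ker
          (b.domRestrict₁₂ (LinearMap.ker (b u)) (LinearMap.ker (b u)))).map
        (LinearMap.ker (b u)).subtype =
      LinearMap.ker b ⊔ Submodule.span ℝ {u} ∧
    LinearMap.ker b ⊓ Submodule.span ℝ {u} = ⊥ :=
  stmt9_general b hb_symm u huu hu
end

section
/- Let b be a symmetric bilinear form on a real vector space V of dimension d, and suppose V has a basis e₁, …, e_d with b(e_i, e_j) = 0 for i ≠ j, b(e_i, e_i) = 1 for 1 ≤ i ≤ p, b(e_i, e_i) = −1 for p < i ≤ p + q, and b(e_i, e_i) = 0 for i > p + q. Let u ∈ V satisfy b(u,u) = 0 and b(u,y) ≠ 0 for some y ∈ V. Then the (d−1)-dimensional subspace u^⊥ᵇ = {x ∈ V : b(u,x) = 0} has a basis f₁, …, f_{d−1} with b(f_i, f_j) = 0 for i ≠ j, in which exactly p − 1 of the values b(f_i, f_i) equal 1, exactly q − 1 equal −1, and exactly d − p − q + 1 equal 0. In other words, the sign pattern of the restriction of b to u^⊥ᵇ arises from that of b by replacing one plus-minus pair with a zero. -/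
/-!
In the coordinates of `e`, `(V, b)` becomes `ℝᵖ × ℝ^q × ℝ^r` with the form
`⟪x, x'⟫ - ⟪y, y'⟫`. Write `u = (v, w, z)`: `b(u, u) = 0` says `‖v‖ = ‖w‖`, and since `u` is not
in the radical, `v` and `w` are nonzero. An orthonormal basis of `v^⊥ ⊆ ℝᵖ`, one of
`w^⊥ ⊆ ℝ^q`, the standard basis of the null block `ℝ^r` and the isotropic vector `(v, w, 0)`
are `d - 1` linearly independent, pairwise orthogonal vectors of `u^⊥ᵇ`, hence a basis of
this hyperplane, of squares `1`, `-1`, `0` and `0`.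
-/

open Module
open scoped RealInnerProductSpace

theorem Module.Basis.apply_equivFun_symm_apply_equivFun_symm {R M ι : Type*} [CommSemiring R]
    [AddCommMonoid M] [Module R M] [Fintype ι] (b : M →ₗ[R] M →ₗ[R] R) (e : Basis ι R M)
    (he : Pairwise fun i j => b (e i) (e j) = 0) (c c' : ι → R) :
    b (e.equivFun.symm c) (e.equivFun.symm c') = ∑ i, c i * c' i * b (e i) (e i) := by
  simp only [Basis.equivFun_symm_apply, map_sum, map_smul, LinearMap.sum_apply,
    LinearMap.smul_apply, smul_eq_mul]
  refine Finset.sum_congr rfl fun i _ => ?_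
  rw [Finset.sum_eq_single i (fun j _ hji => by simp [he hji]) (by simp)]
  ring

def signPattern {α β γ : Type*} : α ⊕ β ⊕ γ → ℝ :=
  Sum.elim (fun _ => 1) (Sum.elim (fun _ => -1) fun _ => 0)

section signPattern

variable {α β γ : Type*} [Fintype α] [Fintype β] [Fintype γ]

theorem card_signPattern_eq_one :
    Nat.card {x : α ⊕ β ⊕ γ // signPattern x = 1} = Nat.card α := by
  rw [Nat.card_eq_fintype_card, Fintype.card_subtype, Finset.card_filter]
  norm_num [Fintype.sum_sum_type, signPattern]

theorem card_signPattern_eq_neg_one :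
    Nat.card {x : α ⊕ β ⊕ γ // signPattern x = -1} = Nat.card β := by
  rw [Nat.card_eq_fintype_card, Fintype.card_subtype, Finset.card_filter]
  norm_num [Fintype.sum_sum_type, signPattern]

theorem card_signPattern_eq_zero :
    Nat.card {x : α ⊕ β ⊕ γ // signPattern x = 0} = Nat.card γ := by
  rw [Nat.card_eq_fintype_card, Fintype.card_subtype, Finset.card_filter]
  norm_num [Fintype.sum_sum_type, signPattern]

end signPattern

namespace Module.Basis

variable {α β γ V : Type*} [Fintype α] [Fintype β] [Fintype γ] [AddCommGroup V] [Module ℝ V]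

noncomputable def signatureEquiv (e : Basis (α ⊕ β ⊕ γ) ℝ V) :
    (EuclideanSpace ℝ α × EuclideanSpace ℝ β × (γ → ℝ)) ≃ₗ[ℝ] V :=
  ((EuclideanSpace.equiv α ℝ).toLinearEquiv.prodCongr
      (((EuclideanSpace.equiv β ℝ).toLinearEquiv.prodCongr (LinearEquiv.refl ℝ (γ → ℝ))) ≪≫ₗ
        (LinearEquiv.sumArrowLequivProdArrow β γ ℝ ℝ).symm) ≪≫ₗ
    (LinearEquiv.sumArrowLequivProdArrow α (β ⊕ γ) ℝ ℝ).symm) ≪≫ₗ e.equivFun.symm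

theorem signatureEquiv_apply (e : Basis (α ⊕ β ⊕ γ) ℝ V)
    (a : EuclideanSpace ℝ α × EuclideanSpace ℝ β × (γ → ℝ)) :
    e.signatureEquiv a = e.equivFun.symm (Sum.elim a.1 (Sum.elim a.2.1 a.2.2)) := by
  simp [signatureEquiv]

theorem apply_signatureEquiv_apply_signatureEquiv (b : V →ₗ[ℝ] V →ₗ[ℝ] ℝ)
    (e : Basis (α ⊕ β ⊕ γ) ℝ V) (he_offdiag : Pairwise fun x y => b (e x) (e y) = 0)
    (he_diag : ∀ x, b (e x) (e x) = signPattern x)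
    (a a' : EuclideanSpace ℝ α × EuclideanSpace ℝ β × (γ → ℝ)) :
    b (e.signatureEquiv a) (e.signatureEquiv a') = ⟪a.1, a'.1⟫ - ⟪a.2.1, a'.2.1⟫ := by
  rw [signatureEquiv_apply, signatureEquiv_apply,
    e.apply_equivFun_symm_apply_equivFun_symm b he_offdiag]
  simp [he_diag, Fintype.sum_sum_type, signPattern, PiLp.inner_apply, mul_comm, sub_eq_add_neg]

end Module.Basis

section perpFamily

variable {E F Z : Type*} [NormedAddCommGroup E] [InnerProductSpace ℝ E]
  [NormedAddCommGroup F] [InnerProductSpace ℝ F] [AddCommGroup Z]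
  {ι ι' κ : Type*} {o : ι → E} {o' : ι' → F} {ζ : κ → Z} {v : E} {w : F}

variable (o o' ζ v w) in
def perpFamily : ι ⊕ ι' ⊕ κ ⊕ Unit → E × F × Z :=
  Sum.elim (fun i => (o i, 0, 0)) <| Sum.elim (fun j => (0, o' j, 0)) <|
    Sum.elim (fun k => (0, 0, ζ k)) fun _ => (v, w, 0)

theorem inner_sub_inner_perpFamily_self (ho : Orthonormal ℝ o) (ho' : Orthonormal ℝ o')
    (hvw : ‖v‖ = ‖w‖) (x : ι ⊕ ι' ⊕ κ ⊕ Unit) :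
    ⟪(perpFamily o o' ζ v w x).1, (perpFamily o o' ζ v w x).1⟫ -
      ⟪(perpFamily o o' ζ v w x).2.1, (perpFamily o o' ζ v w x).2.1⟫ = signPattern x := by
  rcases x with i | j | k | _ <;> simp [perpFamily, signPattern, ho.1, ho'.1, hvw]

theorem inner_sub_inner_perpFamily_of_ne (ho : Orthonormal ℝ o) (ho' : Orthonormal ℝ o')
    (hov : ∀ i, ⟪v, o i⟫ = 0) (hwo' : ∀ j, ⟪w, o' j⟫ = 0) :
    Pairwise fun x y => ⟪(perpFamily o o' ζ v w x).1, (perpFamily o o' ζ v w y).1⟫ -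
      ⟪(perpFamily o o' ζ v w x).2.1, (perpFamily o o' ζ v w y).2.1⟫ = 0 := by
  rintro (i | j | k | _) (i' | j' | k' | _) hxy <;>
    simp_all [perpFamily, ho.inner_eq_zero, ho'.inner_eq_zero, real_inner_comm v,
      real_inner_comm w]

theorem inner_sub_inner_perpFamily_right (hov : ∀ i, ⟪v, o i⟫ = 0) (hwo' : ∀ j, ⟪w, o' j⟫ = 0)
    (hvw : ‖v‖ = ‖w‖) (x : ι ⊕ ι' ⊕ κ ⊕ Unit) :
    ⟪v, (perpFamily o o' ζ v w x).1⟫ - ⟪w, (perpFamily o o' ζ v w x).2.1⟫ = 0 := by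
  rcases x with i | j | k | _ <;> simp [perpFamily, hov, hwo', hvw]

theorem linearIndependent_perpFamily [Module ℝ Z] [Fintype ι] [Fintype ι'] [Fintype κ]
    (ho : Orthonormal ℝ o) (ho' : Orthonormal ℝ o') (hζ : LinearIndependent ℝ ζ)
    (hov : ∀ i, ⟪v, o i⟫ = 0) (hv : v ≠ 0) :
    LinearIndependent ℝ (perpFamily o o' ζ v w) := by
  rw [Fintype.linearIndependent_iff]
  intro g hg
  simp only [Fintype.sum_sum_type, perpFamily, Sum.elim_inl, Sum.elim_inr, Prod.smul_mk,
    smul_zero, Prod.ext_iff, Prod.fst_add, Prod.snd_add, Prod.fst_sum, Prod.snd_sum,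
    Finset.sum_const_zero, zero_add, add_zero, Fintype.univ_unit, Finset.sum_singleton,
    Prod.fst_zero, Prod.snd_zero] at hg
  obtain ⟨hE, hF, hZ⟩ := hg
  have hunit : g (Sum.inr (Sum.inr (Sum.inr ()))) = 0 := by
    simpa [inner_add_right, inner_sum, inner_smul_right, hov, hv] using congrArg (⟪v, ·⟫) hE
  rw [hunit, zero_smul, add_zero] at hE hF
  rintro (i | j | k | ⟨⟩)
  · exact Fintype.linearIndependent_iff.mp ho.linearIndependent _ hE i
  · exact Fintype.linearIndependent_iff.mp ho'.linearIndependent _ hF j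
  · exact Fintype.linearIndependent_iff.mp hζ _ hZ k
  · exact hunit

end perpFamily

theorem exists_orthonormal_orthogonal_singleton {E : Type*} [NormedAddCommGroup E]
    [InnerProductSpace ℝ E] [FiniteDimensional ℝ E] {v : E} (hv : v ≠ 0) :
    ∃ o : Fin (finrank ℝ E - 1) → E, Orthonormal ℝ o ∧ ∀ i, ⟪v, o i⟫ = 0 := by
  have : 0 < finrank ℝ E := finrank_pos_iff_exists_ne_zero.mpr ⟨v, hv⟩
  have : Fact (finrank ℝ E = finrank ℝ E - 1 + 1) := ⟨by omega⟩
  let O := OrthonormalBasis.fromOrthogonalSpanSingleton (𝕜 := ℝ) (finrank ℝ E - 1) hv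
  exact ⟨fun i => O i, O.orthonormal.comp_linearIsometry (ℝ ∙ v)ᗮ.subtypeₗᵢ,
    fun i => Submodule.mem_orthogonal_singleton_iff_inner_right.mp (O i).2⟩

theorem exists_basis_ker_signPattern {E F Z V κ : Type*} [NormedAddCommGroup E]
    [InnerProductSpace ℝ E] [FiniteDimensional ℝ E] [NormedAddCommGroup F]
    [InnerProductSpace ℝ F] [FiniteDimensional ℝ F] [AddCommGroup Z] [Module ℝ Z]
    [AddCommGroup V] [Module ℝ V] [Fintype κ]
    (b : V →ₗ[ℝ] V →ₗ[ℝ] ℝ) (Ψ : (E × F × Z) ≃ₗ[ℝ] V)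
    (hΨ : ∀ a a', b (Ψ a) (Ψ a') = ⟪a.1, a'.1⟫ - ⟪a.2.1, a'.2.1⟫) (ζ : Basis κ ℝ Z)
    (u : V) (huu : b u u = 0) (hu : b u ≠ 0) :
    ∃ B : Basis (Fin (finrank ℝ E - 1) ⊕ Fin (finrank ℝ F - 1) ⊕ κ ⊕ Unit) ℝ
        (LinearMap.ker (b u)),
      (Pairwise fun x y => b (B x) (B y) = 0) ∧ ∀ x, b (B x) (B x) = signPattern x := by
  obtain ⟨⟨v, w, z⟩, rfl⟩ := Ψ.surjective u
  have hbu (a : E × F × Z) : b (Ψ (v, w, z)) (Ψ a) = ⟪v, a.1⟫ - ⟪w, a.2.1⟫ := hΨ _ a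
  have hvw : ‖v‖ = ‖w‖ := by
    rw [hbu, real_inner_self_eq_norm_sq, real_inner_self_eq_norm_sq, sub_eq_zero] at huu
    exact (sq_eq_sq₀ (norm_nonneg v) (norm_nonneg w)).mp huu
  have hv : v ≠ 0 := by
    rintro rfl
    obtain rfl : w = 0 := norm_eq_zero.mp (by rw [← hvw, norm_zero])
    exact hu (LinearMap.ext fun y => by simpa using hbu (Ψ.symm y))
  have hw : w ≠ 0 := fun hw => hv (norm_eq_zero.mp (by rw [hvw, hw, norm_zero]))
  obtain ⟨o, ho, hov⟩ := exists_orthonormal_orthogonal_singleton hv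
  obtain ⟨o', ho', hwo'⟩ := exists_orthonormal_orthogonal_singleton hw
  let Φ := perpFamily o o' ζ v w
  have hmem (x) : Ψ (Φ x) ∈ LinearMap.ker (b (Ψ (v, w, z))) := by
    rw [LinearMap.mem_ker, hbu]
    exact inner_sub_inner_perpFamily_right hov hwo' hvw x
  have hli : LinearIndependent ℝ fun x => (⟨Ψ (Φ x), hmem x⟩ : LinearMap.ker _) :=
    .of_comp (LinearMap.ker _).subtype <|
      (linearIndependent_perpFamily ho ho' ζ.linearIndependent hov hv).map' _ Ψ.ker
  have : FiniteDimensional ℝ Z := .of_basis ζ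
  have : FiniteDimensional ℝ V := Ψ.finiteDimensional
  have hcard : Fintype.card (Fin (finrank ℝ E - 1) ⊕ Fin (finrank ℝ F - 1) ⊕ κ ⊕ Unit) =
      finrank ℝ (LinearMap.ker (b (Ψ (v, w, z)))) := by
    have hker := Module.Dual.finrank_ker_add_one_of_ne_zero hu
    rw [← Ψ.finrank_eq, finrank_prod, finrank_prod, finrank_eq_card_basis ζ] at hker
    have : 0 < finrank ℝ E := finrank_pos_iff_exists_ne_zero.mpr ⟨v, hv⟩
    have : 0 < finrank ℝ F := finrank_pos_iff_exists_ne_zero.mpr ⟨w, hw⟩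
    simp only [Fintype.card_sum, Fintype.card_fin, Fintype.card_unit]
    omega
  refine ⟨basisOfLinearIndependentOfCardEqFinrank' _ hli hcard, fun x y hxy => ?_, fun x => ?_⟩
  · simpa [hΨ] using inner_sub_inner_perpFamily_of_ne ho ho' hov hwo' hxy
  · simpa [hΨ] using inner_sub_inner_perpFamily_self ho ho' hvw x

def finSignatureEquiv (d p q : ℕ) (h : p + q ≤ d) : Fin p ⊕ Fin q ⊕ Fin (d - p - q) ≃ Fin d :=
  (Equiv.sumCongr (Equiv.refl _) finSumFinEquiv).trans (finSumFinEquiv.trans (finCongr (by omega)))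

theorem apply_finSignatureEquiv {d p q : ℕ} (h : p + q ≤ d) {s : Fin d → ℝ}
    (hs_pos : ∀ i : Fin d, (i : ℕ) < p → s i = 1)
    (hs_neg : ∀ i : Fin d, p ≤ (i : ℕ) → (i : ℕ) < p + q → s i = -1)
    (hs_zero : ∀ i : Fin d, p + q ≤ (i : ℕ) → s i = 0) (x : Fin p ⊕ Fin q ⊕ Fin (d - p - q)) :
    s (finSignatureEquiv d p q h x) = signPattern x := by
  rcases x with k | k | k
  · exact hs_pos _ (by simp [finSignatureEquiv])
  · exact hs_neg _ (by simp [finSignatureEquiv]) (by simp [finSignatureEquiv])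
  · exact hs_zero _ (by simp [finSignatureEquiv])

theorem stmt10_general
    {V : Type*} [AddCommGroup V] [Module ℝ V] [FiniteDimensional ℝ V]
    (b : V →ₗ[ℝ] V →ₗ[ℝ] ℝ)
    (d p q : ℕ) (hpq : p + q ≤ d)
    (e : Module.Basis (Fin d) ℝ V)
    (he_offdiag : ∀ i j : Fin d, i ≠ j → b (e i) (e j) = 0)
    (he_pos : ∀ i : Fin d, (i : ℕ) < p → b (e i) (e i) = 1)
    (he_neg : ∀ i : Fin d, p ≤ (i : ℕ) → (i : ℕ) < p + q → b (e i) (e i) = -1)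
    (he_zero : ∀ i : Fin d, p + q ≤ (i : ℕ) → b (e i) (e i) = 0)
    (u : V) (huu : b u u = 0) (hu : ∃ y : V, b u y ≠ 0) :
    ∃ f : Module.Basis (Fin (d - 1)) ℝ (LinearMap.ker (b u)),
      (∀ i j : Fin (d - 1), i ≠ j → b (f i : V) (f j : V) = 0) ∧
      Nat.card {i : Fin (d - 1) // b (f i : V) (f i : V) = 1} = p - 1 ∧
      Nat.card {i : Fin (d - 1) // b (f i : V) (f i : V) = -1} = q - 1 ∧
      Nat.card {i : Fin (d - 1) // b (f i : V) (f i : V) = 0} = d - p - q + 1 := by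
  let σ := finSignatureEquiv d p q hpq
  let e' := e.reindex σ.symm
  have he'_offdiag : Pairwise fun x y => b (e' x) (e' y) = 0 := fun x y hxy => by
    simpa [e'] using he_offdiag _ _ (σ.injective.ne hxy)
  have he'_diag (x) : b (e' x) (e' x) = signPattern x := by
    simpa [e', σ] using apply_finSignatureEquiv hpq he_pos he_neg he_zero x
  have hbu : b u ≠ 0 := by simpa [DFunLike.ne_iff] using hu
  obtain ⟨B, hB_offdiag, hB_diag⟩ := exists_basis_ker_signPattern b e'.signatureEquiv
    (e'.apply_signatureEquiv_apply_signatureEquiv b he'_offdiag he'_diag)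
    (Pi.basisFun ℝ (Fin (d - p - q))) u huu hbu
  have hker : finrank ℝ (LinearMap.ker (b u)) = d - 1 := by
    have := Module.Dual.finrank_ker_add_one_of_ne_zero hbu
    rw [finrank_eq_card_basis e, Fintype.card_fin] at this
    omega
  let τ := Fintype.equivFinOfCardEq ((finrank_eq_card_basis B).symm.trans hker)
  have hcount (c : ℝ) : Nat.card {i // b (B.reindex τ i : V) (B.reindex τ i) = c} =
      Nat.card {x // signPattern x = c} :=
    Nat.card_congr (τ.symm.subtypeEquiv fun i => by simp [hB_diag])
  refine ⟨B.reindex τ, fun i j hij => by simpa using hB_offdiag (τ.symm.injective.ne hij),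
    ?_, ?_, ?_⟩
  · rw [hcount, card_signPattern_eq_one]; simp
  · rw [hcount, card_signPattern_eq_neg_one]; simp
  · rw [hcount, card_signPattern_eq_zero]; simp

/-- If a symmetric bilinear form `b` on a `d`-dimensional real
vector space has a diagonalizing basis with `p` plus-ones, `q` minus-ones and
`d − p − q` zeros on the diagonal, and `u` satisfies `b(u,u) = 0` and
`u ∉ rad(b)`, then the hyperplane `u^⊥ᵇ = {x | b(u,x) = 0}` has a
`b`-diagonalizing basis with exactly `p − 1` plus-ones, `q − 1` minus-ones and
`d − p − q + 1` zeros on the diagonal. -/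
theorem stmt10
    {V : Type*} [AddCommGroup V] [Module ℝ V] [FiniteDimensional ℝ V]
    (b : V →ₗ[ℝ] V →ₗ[ℝ] ℝ)
    (hb_symm : ∀ y z : V, b y z = b z y)
    (d p q : ℕ) (hpq : p + q ≤ d)
    (e : Module.Basis (Fin d) ℝ V)
    (he_offdiag : ∀ i j : Fin d, i ≠ j → b (e i) (e j) = 0)
    (he_pos : ∀ i : Fin d, (i : ℕ) < p → b (e i) (e i) = 1)
    (he_neg : ∀ i : Fin d, p ≤ (i : ℕ) → (i : ℕ) < p + q → b (e i) (e i) = -1)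
    (he_zero : ∀ i : Fin d, p + q ≤ (i : ℕ) → b (e i) (e i) = 0)
    (u : V) (huu : b u u = 0) (hu : ∃ y : V, b u y ≠ 0) :
    ∃ f : Module.Basis (Fin (d - 1)) ℝ (LinearMap.ker (b u)),
      (∀ i j : Fin (d - 1), i ≠ j → b (f i : V) (f j : V) = 0) ∧
      Nat.card {i : Fin (d - 1) // b (f i : V) (f i : V) = 1} = p - 1 ∧
      Nat.card {i : Fin (d - 1) // b (f i : V) (f i : V) = -1} = q - 1 ∧
      Nat.card {i : Fin (d - 1) // b (f i : V) (f i : V) = 0} = d - p - q + 1 :=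
  stmt10_general b d p q hpq e he_offdiag he_pos he_neg he_zero u huu hu
end

section
/- Let (V,g) be a pseudo-Euclidean space of dimension n ≥ 3 and let v be a smooth conformal vector field on (V,g) with smooth conformal factor φ : V → ℝ, with g-gradient ∇φ. Then for all x, y, z ∈ V the second Fréchet derivative D²v_x of v at x (a symmetric bilinear map V × V → V) satisfies 2·D²v_x(y,z) = dφ_x(z)·y + dφ_x(y)·z − g(y,z)·∇φ(x), where dφ_x denotes the Fréchet derivative of φ at x. -/
/-- For a smooth conformal vector field `v` on a pseudo-Euclidean
space `(V,g)` of dimension `n ≥ 3`, with smooth conformal factor `φ` and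
`g`-gradient `∇φ`, the second derivative of `v` satisfies
`2 D²v_x(y,z) = dφ_x(z)·y + dφ_x(y)·z − g(y,z)·∇φ(x)`. -/
theorem stmt11
    {V : Type*} [NormedAddCommGroup V] [NormedSpace ℝ V] [FiniteDimensional ℝ V]
    (hn : 3 ≤ Module.finrank ℝ V)
    (g : V →ₗ[ℝ] V →ₗ[ℝ] ℝ)
    (hg_symm : ∀ x y : V, g x y = g y x)
    (hg_nondeg : ∀ x : V, (∀ y : V, g x y = 0) → x = 0)
    (v : V → V) (hv : ContDiff ℝ (⊤ : ℕ∞) v)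
    (φ : V → ℝ) (hφ : ContDiff ℝ (⊤ : ℕ∞) φ)
    (hconf : ∀ x y z : V,
      g (fderiv ℝ v x y) z + g y (fderiv ℝ v x z) = φ x * g y z)
    (gradφ : V → V)
    (hgrad : ∀ x w : V, g (gradφ x) w = fderiv ℝ φ x w) :
    ∀ x y z : V,
      (2 : ℝ) • fderiv ℝ (fderiv ℝ v) x y z =
        (fderiv ℝ φ x z) • y + (fderiv ℝ φ x y) • z - (g y z) • gradφ x := by
  have hf2 : ContDiff ℝ (⊤ : ℕ∞) (fderiv ℝ v) := hv.fderiv_right (by simp)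
  -- key differentiated identity
  have key : ∀ x w y z : V,
      g (fderiv ℝ (fderiv ℝ v) x w y) z + g y (fderiv ℝ (fderiv ℝ v) x w z)
        = fderiv ℝ φ x w * g y z := by
    intro x w y z
    have hD : HasFDerivAt (fderiv ℝ v) (fderiv ℝ (fderiv ℝ v) x) x :=
      (hf2.differentiable (by simp) x).hasFDerivAt
    have h1 : HasFDerivAt (fun x => fderiv ℝ v x y)
        ((ContinuousLinearMap.apply ℝ V y).comp (fderiv ℝ (fderiv ℝ v) x)) x :=
      (ContinuousLinearMap.apply ℝ V y).hasFDerivAt.comp x hD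
    have h2 : HasFDerivAt (fun x => fderiv ℝ v x z)
        ((ContinuousLinearMap.apply ℝ V z).comp (fderiv ℝ (fderiv ℝ v) x)) x :=
      (ContinuousLinearMap.apply ℝ V z).hasFDerivAt.comp x hD
    set Gz : V →L[ℝ] ℝ := LinearMap.toContinuousLinearMap (g.flip z) with hGz
    set Gy : V →L[ℝ] ℝ := LinearMap.toContinuousLinearMap (g y) with hGy
    have h1' : HasFDerivAt (fun x => g (fderiv ℝ v x y) z)
        (Gz.comp ((ContinuousLinearMap.apply ℝ V y).comp (fderiv ℝ (fderiv ℝ v) x))) x :=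
      Gz.hasFDerivAt.comp x h1
    have h2' : HasFDerivAt (fun x => g y (fderiv ℝ v x z))
        (Gy.comp ((ContinuousLinearMap.apply ℝ V z).comp (fderiv ℝ (fderiv ℝ v) x))) x :=
      Gy.hasFDerivAt.comp x h2
    have h3 : HasFDerivAt (fun x => φ x * g y z) ((g y z) • fderiv ℝ φ x) x :=
      ((hφ.differentiable (by simp) x).hasFDerivAt).mul_const _
    have htot := (h1'.add h2').sub h3
    have hF : (fun x => g (fderiv ℝ v x y) z + g y (fderiv ℝ v x z) - φ x * g y z)
        = fun _ : V => (0 : ℝ) := by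
      funext u
      rw [hconf u y z]; ring
    rw [show ((fun x => g (fderiv ℝ v x y) z) + (fun x => g y (fderiv ℝ v x z)) - (fun x => φ x * g y z)) = fun _ : V => (0 : ℝ) from hF] at htot
    have hz : HasFDerivAt (fun _ : V => (0 : ℝ)) (0 : V →L[ℝ] ℝ) x :=
      hasFDerivAt_const 0 x
    have heq := htot.unique hz
    have := congrArg (fun (L : V →L[ℝ] ℝ) => L w) heq
    simp only [hGz, hGy, ContinuousLinearMap.sub_apply, ContinuousLinearMap.add_apply,
      ContinuousLinearMap.comp_apply, ContinuousLinearMap.smul_apply,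
      ContinuousLinearMap.apply_apply, ContinuousLinearMap.zero_apply,
      LinearMap.coe_toContinuousLinearMap', LinearMap.flip_apply, smul_eq_mul] at this
    linarith [this]
  intro x y z
  have hsymm : ∀ a b : V, fderiv ℝ (fderiv ℝ v) x a b = fderiv ℝ (fderiv ℝ v) x b a :=
    second_derivative_symmetric
      (fun u => (hv.differentiable (by simp) u).hasFDerivAt)
      ((hf2.differentiable (by simp) x).hasFDerivAt)
  -- scalar identity: 2 K y z w = dφ(y) g(z,w) + dφ(z) g(w,y) − dφ(w) g(y,z)
  have scalar : ∀ w : V,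
      2 * g (fderiv ℝ (fderiv ℝ v) x y z) w
        = fderiv ℝ φ x y * g z w + fderiv ℝ φ x z * g w y - fderiv ℝ φ x w * g y z := by
    intro w
    have E1 := key x w y z
    have E2 := key x y z w
    have E3 := key x z w y
    rw [hg_symm y (fderiv ℝ (fderiv ℝ v) x w z)] at E1
    rw [hg_symm z (fderiv ℝ (fderiv ℝ v) x y w)] at E2
    rw [hg_symm w (fderiv ℝ (fderiv ℝ v) x z y)] at E3
    have s1 : fderiv ℝ (fderiv ℝ v) x y w = fderiv ℝ (fderiv ℝ v) x w y := hsymm y w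
    have s2 : fderiv ℝ (fderiv ℝ v) x z w = fderiv ℝ (fderiv ℝ v) x w z := hsymm z w
    have s3 : fderiv ℝ (fderiv ℝ v) x z y = fderiv ℝ (fderiv ℝ v) x y z := hsymm z y
    rw [s1] at E2
    rw [s2, s3] at E3
    linarith
  rw [← sub_eq_zero]
  apply hg_nondeg
  intro w
  have expand : g ((2 : ℝ) • fderiv ℝ (fderiv ℝ v) x y z -
      ((fderiv ℝ φ x z) • y + (fderiv ℝ φ x y) • z - (g y z) • gradφ x)) w
      = 2 * g (fderiv ℝ (fderiv ℝ v) x y z) w -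
        (fderiv ℝ φ x z * g y w + fderiv ℝ φ x y * g z w - g y z * g (gradφ x) w) := by
    simp [map_sub, map_add, map_smul, LinearMap.sub_apply, LinearMap.add_apply,
      LinearMap.smul_apply, smul_eq_mul]
    try ring
  rw [expand, hgrad x w]
  have := scalar w
  rw [hg_symm w y] at this
  linarith
end

section
/- Let (V,g) be a pseudo-Euclidean space of dimension n ≥ 3 and let v be a smooth conformal vector field on (V,g) with conformal factor φ : V → ℝ. Then φ is an affine function: there exist a real number a and a linear functional α : V → ℝ such that φ(x) = a + α(x) for all x ∈ V. -/
open ContinuousLinearMap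

/-- In `Fin n` with `3 ≤ n`, for any two indices there is a third one. -/
lemma stmt12_exists_third {n : ℕ} (hn : 3 ≤ n) (i j : Fin n) :
    ∃ k : Fin n, k ≠ i ∧ k ≠ j := by
  refine ⟨⟨if 0 ≠ i.val ∧ 0 ≠ j.val then 0 else if 1 ≠ i.val ∧ 1 ≠ j.val then 1 else 2,
    by split_ifs <;> omega⟩, ?_, ?_⟩ <;>
  · simp only [ne_eq, Fin.ext_iff]
    split_ifs <;> omega

set_option maxHeartbeats 1600000 in
/-- The conformal factor `φ` of a smooth conformal vector field
on a pseudo-Euclidean space of dimension `n ≥ 3` is an affine function: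
`φ(x) = a + α(x)` for a constant `a` and a linear functional `α`. -/
theorem stmt12
    {V : Type*} [NormedAddCommGroup V] [NormedSpace ℝ V] [FiniteDimensional ℝ V]
    (hn : 3 ≤ Module.finrank ℝ V)
    (g : V →ₗ[ℝ] V →ₗ[ℝ] ℝ)
    (hg_symm : ∀ x y : V, g x y = g y x)
    (hg_nondeg : ∀ x : V, (∀ y : V, g x y = 0) → x = 0)
    (v : V → V) (hv : ContDiff ℝ (⊤ : ℕ∞) v)
    (φ : V → ℝ)
    (hconf : ∀ x y z : V,
      g (fderiv ℝ v x y) z + g y (fderiv ℝ v x z) = φ x * g y z) :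
    ∃ (a : ℝ) (α : V →ₗ[ℝ] ℝ), ∀ x : V, φ x = a + α x := by
  classical
  -- continuous version of g
  set G : V →L[ℝ] V →L[ℝ] ℝ := LinearMap.toContinuousLinearMap
    ((LinearMap.toContinuousLinearMap :
        (V →ₗ[ℝ] ℝ) ≃ₗ[ℝ] (V →L[ℝ] ℝ)).toLinearMap ∘ₗ g) with hGdef
  have hG : ∀ x y, G x y = g x y := fun _ _ => rfl
  -- derivatives of v
  set A : V → V →L[ℝ] V := fderiv ℝ v with hAdef
  set A' : V → V →L[ℝ] V →L[ℝ] V := fderiv ℝ A with hA'def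
  set A'' : V → V →L[ℝ] V →L[ℝ] V →L[ℝ] V := fderiv ℝ A' with hA''def
  have hvd : Differentiable ℝ v := hv.differentiable (by simp)
  have hAc : ContDiff ℝ 3 A := hv.fderiv_right (by exact WithTop.coe_le_coe.mpr (le_top : (3 + 1 : ℕ∞) ≤ ⊤))
  have hA'c : ContDiff ℝ 2 A' := hAc.fderiv_right (by norm_num)
  have hAd : Differentiable ℝ A := hAc.differentiable (by norm_num)
  have hA'd : Differentiable ℝ A' := hA'c.differentiable (by norm_num)
  -- orthogonal basis
  have hsym : g.IsSymm := ⟨fun x y => by simpa using hg_symm x y⟩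
  obtain ⟨b, hb⟩ := LinearMap.BilinForm.exists_orthogonal_basis hsym
  have horth : ∀ i j, i ≠ j → g (b i) (b j) = 0 := fun i j hij => hb hij
  have hnd : ∀ i, g (b i) (b i) ≠ 0 := fun i =>
    LinearMap.BilinForm.iIsOrtho.not_isOrtho_basis_self_of_nondegenerate hb
      ⟨fun x hx => hg_nondeg x hx, fun y hy => hg_nondeg y (fun x => by rw [hg_symm]; exact hy x)⟩ i
  set y0 : V := b ⟨0, by omega⟩ with hy0
  have hd0 : g y0 y0 ≠ 0 := hnd _
  -- φ is smooth
  set Lφ : (V →L[ℝ] V) →L[ℝ] ℝ :=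
    (2 / g y0 y0) • ((G.flip y0).comp (ContinuousLinearMap.apply ℝ V y0)) with hLφ
  have hφeq : φ = fun x => Lφ (A x) := by
    funext x
    have h := hconf x y0 y0
    rw [hg_symm y0 (A x y0)] at h
    have hL : Lφ (A x) = (2 / g y0 y0) * g (A x y0) y0 := rfl
    rw [hL]
    field_simp
    linarith
  have hφc : ContDiff ℝ 2 φ := by
    rw [hφeq]; exact Lφ.contDiff.comp (hAc.of_le (by norm_num))
  have hφd : Differentiable ℝ φ := hφc.differentiable (by norm_num)
  have hφ'c : ContDiff ℝ 1 (fderiv ℝ φ) := hφc.fderiv_right (by norm_num)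
  have hφ'd : Differentiable ℝ (fderiv ℝ φ) := hφ'c.differentiable (by norm_num)
  set Ψ : V → V →L[ℝ] V →L[ℝ] ℝ := fderiv ℝ (fderiv ℝ φ) with hΨdef
  -- first differentiation of the conformal equation
  have H1 : ∀ x w y z, G (A' x w y) z + G y (A' x w z) = fderiv ℝ φ x w * g y z := by
    intro x w y z
    set L : (V →L[ℝ] V) →L[ℝ] ℝ :=
      ((G.flip z).comp (ContinuousLinearMap.apply ℝ V y)) +
        ((G y).comp (ContinuousLinearMap.apply ℝ V z)) with hL
    have hF : HasFDerivAt (fun x => L (A x)) (L.comp (A' x)) x :=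
      L.hasFDerivAt.comp x (hAd x).hasFDerivAt
    have hK : HasFDerivAt (fun x => φ x * g y z) ((g y z) • fderiv ℝ φ x) x :=
      (hφd x).hasFDerivAt.mul_const _
    have heq : (fun x => L (A x)) = fun x => φ x * g y z := by
      funext x'
      exact hconf x' y z
    rw [heq] at hF
    have huni := hF.unique hK
    have happ := congrArg (fun (T : V →L[ℝ] ℝ) => T w) huni
    simp only [ContinuousLinearMap.comp_apply, ContinuousLinearMap.add_apply,
      ContinuousLinearMap.smul_apply, ContinuousLinearMap.flip_apply,
      ContinuousLinearMap.apply_apply, smul_eq_mul] at happ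
    rw [mul_comm] at happ
    exact happ
  -- second differentiation
  have H2 : ∀ x u w y z,
      G (A'' x u w y) z + G y (A'' x u w z) = Ψ x u w * g y z := by
    intro x u w y z
    set L : (V →L[ℝ] V) →L[ℝ] ℝ :=
      ((G.flip z).comp (ContinuousLinearMap.apply ℝ V y)) +
        ((G y).comp (ContinuousLinearMap.apply ℝ V z)) with hL
    set L1 : (V →L[ℝ] V →L[ℝ] V) →L[ℝ] ℝ :=
      L.comp (ContinuousLinearMap.apply ℝ (V →L[ℝ] V) w) with hL1
    have hF : HasFDerivAt (fun x => L1 (A' x)) (L1.comp (A'' x)) x := by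
      have h := HasFDerivAt.comp (𝕜 := ℝ) (E := V) (F := V →L[ℝ] V →L[ℝ] V) (G := ℝ) (f := A') (f' := fderiv ℝ A' x) (g := L1) (g' := L1) x L1.hasFDerivAt (hA'd x).hasFDerivAt
      exact h
    have hK : HasFDerivAt (fun x => fderiv ℝ φ x w * g y z)
        ((g y z) • ((ContinuousLinearMap.apply ℝ ℝ w).comp (Ψ x))) x := by
      exact (((ContinuousLinearMap.apply ℝ ℝ w).hasFDerivAt.comp x
        (hφ'd x).hasFDerivAt).mul_const _)
    have heq : (fun x => L1 (A' x)) = fun x => fderiv ℝ φ x w * g y z := by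
      funext x'
      exact H1 x' w y z
    rw [heq] at hF
    have huni := hF.unique hK
    have happ := congrArg (fun (T : V →L[ℝ] ℝ) => T u) huni
    simp only [ContinuousLinearMap.comp_apply, ContinuousLinearMap.add_apply,
      ContinuousLinearMap.smul_apply, ContinuousLinearMap.flip_apply,
      ContinuousLinearMap.apply_apply, smul_eq_mul] at happ
    rw [mul_comm] at happ
    exact happ
  -- symmetries
  have hS1 : ∀ x w y, A' x w y = A' x y w := fun x w y =>
    second_derivative_symmetric (fun p => (hvd p).hasFDerivAt) (hAd x).hasFDerivAt w y
  have hS2 : ∀ x u w, A'' x u w = A'' x w u := fun x u w =>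
    second_derivative_symmetric (fun p => (hAd p).hasFDerivAt) (hA'd x).hasFDerivAt u w
  have hS3 : ∀ x u w y, A'' x u w y = A'' x u y w := by
    intro x u w y
    set L2 : (V →L[ℝ] V →L[ℝ] V) →L[ℝ] V :=
      (ContinuousLinearMap.apply ℝ V y).comp
        (ContinuousLinearMap.apply ℝ (V →L[ℝ] V) w) with hL2
    set L2' : (V →L[ℝ] V →L[ℝ] V) →L[ℝ] V :=
      (ContinuousLinearMap.apply ℝ V w).comp
        (ContinuousLinearMap.apply ℝ (V →L[ℝ] V) y) with hL2'
    have hF : HasFDerivAt (fun x => L2 (A' x)) (L2.comp (A'' x)) x := by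
      have h := HasFDerivAt.comp (𝕜 := ℝ) (E := V) (F := V →L[ℝ] V →L[ℝ] V) (G := V) (f := A') (f' := fderiv ℝ A' x) (g := L2) (g' := L2) x L2.hasFDerivAt (hA'd x).hasFDerivAt
      exact h
    have hF' : HasFDerivAt (fun x => L2' (A' x)) (L2'.comp (A'' x)) x := by
      have h := HasFDerivAt.comp (𝕜 := ℝ) (E := V) (F := V →L[ℝ] V →L[ℝ] V) (G := V) (f := A') (f' := fderiv ℝ A' x) (g := L2') (g' := L2') x L2'.hasFDerivAt (hA'd x).hasFDerivAt
      exact h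
    have heq : (fun x => L2 (A' x)) = fun x => L2' (A' x) := by
      funext x'
      exact hS1 x' w y
    rw [heq] at hF
    have huni := hF.unique hF'
    exact congrArg (fun (T : V →L[ℝ] V) => T u) huni
  have hSΨ : ∀ x u w, Ψ x u w = Ψ x w u := fun x u w =>
    second_derivative_symmetric (fun p => (hφd p).hasFDerivAt) (hφ'd x).hasFDerivAt u w
  -- the second derivative of φ vanishes
  have hΨ0 : ∀ x, Ψ x = 0 := by
    intro x
    -- Q symmetries at the level of scalars
    have hQ3 : ∀ u w y z, G (A'' x u w y) z = G (A'' x u y w) z := fun u w y z => by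
      rw [hS3 x u w y]
    have hQ2 : ∀ u w y z, G (A'' x u w y) z = G (A'' x w u y) z := fun u w y z => by
      rw [hS2 x u w]
    -- symmetrized formula
    have F : ∀ u w y z, 2 * G (A'' x u w y) z =
        Ψ x u w * g y z + Ψ x u y * g w z - Ψ x u z * g w y := by
      intro u w y z
      have e1 := H2 x u w y z
      have e2 := H2 x u y w z
      have e3 := H2 x u z w y
      have d1 := hQ3 u w y z
      have d2 := hQ3 u w z y
      have d3 := hQ3 u y z w
      have s1 : G y (A'' x u w z) = G (A'' x u w z) y := by rw [hG, hG, hg_symm]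
      have s2 : G w (A'' x u y z) = G (A'' x u y z) w := by rw [hG, hG, hg_symm]
      have s3 : G w (A'' x u z y) = G (A'' x u z y) w := by rw [hG, hG, hg_symm]
      have d4 : G (A'' x u w z) y = G (A'' x u z w) y := hQ3 u w z y
      simp only [hG] at e1 e2 e3 d1 d2 d3 s1 s2 s3 d4 ⊢
      linear_combination e1 + e2 - e3 - s1 - s2 + s3 + d1 - d2 - d3
    -- swap u and y, using full symmetry of the third derivative
    have hQ13 : ∀ u w y z, G (A'' x u w y) z = G (A'' x y w u) z := fun u w y z => by
      rw [hQ2 u w y z, hQ3 w u y z, hQ2 w y u z]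
    have hstar : ∀ u w y z,
        Ψ x u w * g y z - Ψ x u z * g w y - Ψ x y w * g u z + Ψ x y z * g w u = 0 := by
      intro u w y z
      have f1 := F u w y z
      have f2 := F y w u z
      have s := hQ13 u w y z
      have t := hSΨ x u y
      linear_combination -f1 + f2 + 2 * s - t * g w z
    -- evaluate on the orthogonal basis
    have hdiagE : ∀ i j, i ≠ j →
        Ψ x (b i) (b i) * g (b j) (b j) + Ψ x (b j) (b j) * g (b i) (b i) = 0 := by
      intro i j hij
      have h := hstar (b i) (b i) (b j) (b j)
      rw [horth i j hij] at h
      linear_combination h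
    have hdiag : ∀ i, Ψ x (b i) (b i) = 0 := by
      intro i
      obtain ⟨j, hji, -⟩ := stmt12_exists_third hn i i
      obtain ⟨k, hki, hkj⟩ := stmt12_exists_third hn i j
      have e1 := hdiagE i j (Ne.symm hji)
      have e2 := hdiagE j k (Ne.symm hkj)
      have e3 := hdiagE i k (Ne.symm hki)
      have h2 : 2 * (Ψ x (b i) (b i) * g (b j) (b j) * g (b k) (b k)) = 0 := by
        linear_combination g (b k) (b k) * e1 - g (b i) (b i) * e2 + g (b j) (b j) * e3
      have := mul_ne_zero (hnd j) (hnd k)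
      have h3 : Ψ x (b i) (b i) * (g (b j) (b j) * g (b k) (b k)) = 0 := by
        linear_combination h2 / 2
      rcases mul_eq_zero.1 h3 with h | h
      · exact h
      · exact absurd h this
    have hoff : ∀ i j, i ≠ j → Ψ x (b i) (b j) = 0 := by
      intro i j hij
      obtain ⟨k, hki, hkj⟩ := stmt12_exists_third hn i j
      have h := hstar (b i) (b j) (b k) (b k)
      rw [horth j k (Ne.symm hkj), horth i k (Ne.symm hki),
        horth j i (Ne.symm hij)] at h
      have h' : Ψ x (b i) (b j) * g (b k) (b k) = 0 := by linear_combination h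
      rcases mul_eq_zero.1 h' with h'' | h''
      · exact h''
      · exact absurd h'' (hnd k)
    have hbasis : ∀ i j, Ψ x (b i) (b j) = 0 := by
      intro i j
      rcases eq_or_ne i j with rfl | hij
      · exact hdiag i
      · exact hoff i j hij
    -- conclude that the bilinear map vanishes
    have hall : ∀ u w, Ψ x u w = 0 := by
      set Ψl : V →ₗ[ℝ] V →ₗ[ℝ] ℝ := LinearMap.mk₂ ℝ (fun u w => Ψ x u w)
        (fun m₁ m₂ n => by simp) (fun c m n => by simp)
        (fun m n₁ n₂ => by simp) (fun c m n => by simp) with hΨl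
      have : Ψl = 0 := LinearMap.ext_basis b b (fun i j => by
        simpa [hΨl] using hbasis i j)
      intro u w
      have := congrFun (congrArg (fun (T : V →ₗ[ℝ] V →ₗ[ℝ] ℝ) => (T u : V → ℝ)) this) w
      simpa [hΨl] using this
    exact ContinuousLinearMap.ext fun u => ContinuousLinearMap.ext fun w => by
      simpa using hall u w
  -- conclude: fderiv φ is constant, hence φ is affine
  set α₀ : V →L[ℝ] ℝ := fderiv ℝ φ 0 with hα₀
  have hconst : ∀ p, fderiv ℝ φ p = α₀ := fun p =>
    is_const_of_fderiv_eq_zero hφ'd hΨ0 p 0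
  have hψd : Differentiable ℝ (fun x => φ x - α₀ x) :=
    hφd.sub α₀.differentiable
  have hψ' : ∀ p, fderiv ℝ (fun x => φ x - α₀ x) p = 0 := by
    intro p
    have h1 : HasFDerivAt (fun x => φ x - α₀ x) (fderiv ℝ φ p - α₀) p :=
      (hφd p).hasFDerivAt.sub α₀.hasFDerivAt
    rw [h1.fderiv, hconst p, sub_self]
  refine ⟨φ 0, (α₀ : V →ₗ[ℝ] ℝ), fun x => ?_⟩
  have h := is_const_of_fderiv_eq_zero hψd hψ' x 0
  simp only [map_zero, sub_zero] at h
  have : φ x - α₀ x = φ 0 := h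
  simp only [ContinuousLinearMap.coe_coe]
  linarith
end

section
/- Let (V,g) be a pseudo-Euclidean space and let v : V → V be a smooth map such that Dv_x is g-skew-adjoint for every x ∈ V (i.e. v is a Killing field of the flat pseudo-Riemannian metric determined by g). Then v is affine with constant derivative: Dv_x = Dv_0 for all x ∈ V and v(x) = v(0) + Dv_0(x) for all x ∈ V. Consequently, if v(x₀) = 0 for some x₀ ∈ V, then the zero set {x ∈ V : v(x) = 0} equals the affine subspace x₀ + ker Dv_{x₀}, whose codimension, the rank of Dv_{x₀}, is even. -/
open Module

lemma even_rank_of_skew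
    {V : Type*} [NormedAddCommGroup V] [NormedSpace ℝ V] [FiniteDimensional ℝ V]
    (g : V →ₗ[ℝ] V →ₗ[ℝ] ℝ)
    (hg_symm : ∀ x y : V, g x y = g y x)
    (hg_nondeg : ∀ x : V, (∀ y : V, g x y = 0) → x = 0)
    (A : V →ₗ[ℝ] V) (hA : ∀ y z : V, g (A y) z = - g y (A z)) :
    Even (finrank ℝ (LinearMap.range A)) := by
  classical
  set ω : LinearMap.BilinForm ℝ V := g.comp A with hω
  obtain ⟨W, hW⟩ := Submodule.exists_isCompl (LinearMap.ker A)
  have hrank : finrank ℝ W = finrank ℝ (LinearMap.range A) := by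
    have h1 := Submodule.finrank_add_eq_of_isCompl hW
    have h2 := LinearMap.finrank_range_add_finrank_ker A
    omega
  rw [← hrank]
  have hnd : (ω.restrict W).Nondegenerate := by
    refine LinearMap.BilinForm.Nondegenerate.ofSeparatingLeft ?_
    intro w hw
    have hAw : A (w : V) = 0 := by
      apply hg_nondeg
      intro y
      obtain ⟨k, w', hk, hw', rfl⟩ := Submodule.codisjoint_iff_exists_add_eq.mp hW.codisjoint y
      have hk0 : g (A w) k = 0 := by
        rw [hA]
        have : A k = 0 := hk
        simp [this]
      have hw'0 : g (A w) w' = 0 := hw ⟨w', hw'⟩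
      rw [map_add, hk0, hw'0, add_zero]
    have : (w : V) ∈ LinearMap.ker A ⊓ W := ⟨hAw, w.2⟩
    rw [hW.inf_eq_bot] at this
    exact Subtype.ext this
  set b := finBasis ℝ W
  set M := LinearMap.BilinForm.toMatrix b (ω.restrict W) with hM
  have hdet : M.det ≠ 0 := (LinearMap.BilinForm.nondegenerate_iff_det_ne_zero b).mp hnd
  have hskewM : M.transpose = -M := by
    ext i j
    simp only [Matrix.transpose_apply, Matrix.neg_apply, hM,
      LinearMap.BilinForm.toMatrix_apply]
    show ω (b j : V) (b i : V) = - ω (b i : V) (b j : V)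
    rw [hω]
    simp only [LinearMap.comp_apply]
    rw [hA, hg_symm]
  by_contra hodd
  rw [Nat.not_even_iff_odd] at hodd
  have : M.det = - M.det := by
    conv_lhs => rw [← Matrix.det_transpose, hskewM]
    rw [Matrix.det_neg]
    simp [hodd.neg_one_pow]
  exact hdet (by linarith)


/-- A smooth Killing field `v` of a flat pseudo-Euclidean metric
(i.e. `Dv_x` is `g`-skew-adjoint for every `x`) is affine with constant
derivative: `Dv_x = Dv_0` and `v(x) = v(0) + Dv_0 x` for all `x`.
Consequently, if `v(x₀) = 0`, the zero set of `v` is the affine subspace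
`x₀ + ker Dv_{x₀}`, whose codimension, the rank of `Dv_{x₀}`, is even. -/
theorem stmt13
    {V : Type*} [NormedAddCommGroup V] [NormedSpace ℝ V] [FiniteDimensional ℝ V]
    (g : V →ₗ[ℝ] V →ₗ[ℝ] ℝ)
    (hg_symm : ∀ x y : V, g x y = g y x)
    (hg_nondeg : ∀ x : V, (∀ y : V, g x y = 0) → x = 0)
    (v : V → V) (hv : ContDiff ℝ (⊤ : ℕ∞) v)
    (hskew : ∀ x y z : V, g (fderiv ℝ v x y) z = - g y (fderiv ℝ v x z)) :
    (∀ x : V, fderiv ℝ v x = fderiv ℝ v 0) ∧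
    (∀ x : V, v x = v 0 + fderiv ℝ v 0 x) ∧
    (∀ x₀ : V, v x₀ = 0 →
      {x : V | v x = 0} =
        (fun y => x₀ + y) '' (LinearMap.ker (fderiv ℝ v x₀ : V →ₗ[ℝ] V) : Set V) ∧
      Even (Module.finrank ℝ (LinearMap.range (fderiv ℝ v x₀ : V →ₗ[ℝ] V)))) := by
  have hvd : Differentiable ℝ v := hv.differentiable (by simp)
  have hAc : ContDiff ℝ (⊤ : ℕ∞) (fderiv ℝ v) := hv.fderiv_right (by simp)
  have hAd : Differentiable ℝ (fderiv ℝ v) := hAc.differentiable (by simp)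
  -- the second derivative vanishes everywhere
  have hB0 : ∀ x : V, fderiv ℝ (fderiv ℝ v) x = 0 := by
    intro x
    set B := fderiv ℝ (fderiv ℝ v) x with hB
    have hBx : HasFDerivAt (fderiv ℝ v) B x := (hAd x).hasFDerivAt
    have sym : ∀ u y : V, B u y = B y u :=
      second_derivative_symmetric (fun y => (hvd y).hasFDerivAt) hBx
    have skw : ∀ u y z : V, g (B u y) z = - g y (B u z) := by
      intro u y z
      let φl : (V →L[ℝ] V) →ₗ[ℝ] ℝ :=
        { toFun := fun L => g (L y) z
          map_add' := by intro a b; simp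
          map_smul' := by intro c a; simp }
      let χl : (V →L[ℝ] V) →ₗ[ℝ] ℝ :=
        { toFun := fun L => - g y (L z)
          map_add' := by intro a b; simp; abel
          map_smul' := by intro c a; simp }
      let φ : (V →L[ℝ] V) →L[ℝ] ℝ := φl.toContinuousLinearMap
      let χ : (V →L[ℝ] V) →L[ℝ] ℝ := χl.toContinuousLinearMap
      have h1 : HasFDerivAt (fun x' => φ (fderiv ℝ v x')) (φ.comp B) x :=
        φ.hasFDerivAt.comp x hBx
      have h2 : HasFDerivAt (fun x' => χ (fderiv ℝ v x')) (χ.comp B) x :=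
        χ.hasFDerivAt.comp x hBx
      have hfeq : (fun x' => φ (fderiv ℝ v x')) = (fun x' => χ (fderiv ℝ v x')) := by
        funext x'
        exact hskew x' y z
      rw [hfeq] at h1
      have := h2.unique h1
      have happ : χ.comp B u = φ.comp B u := by rw [this]
      exact happ.symm
    have Szero : ∀ u y z : V, g (B u y) z = 0 := by
      have anti : ∀ u y z : V, g (B u y) z = - g (B u z) y := by
        intro u y z
        rw [skw, hg_symm]
      have symm' : ∀ u y z : V, g (B u y) z = g (B y u) z := by
        intro u y z
        rw [sym]
      intro u y z
      have e1 : g (B u y) z = - g (B u z) y := anti u y z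
      have e2 : g (B u z) y = g (B z u) y := symm' u z y
      have e3 : g (B z u) y = - g (B z y) u := anti z u y
      have e4 : g (B z y) u = g (B y z) u := symm' z y u
      have e5 : g (B y z) u = - g (B y u) z := anti y z u
      have e6 : g (B y u) z = g (B u y) z := symm' y u z
      linarith [e1, e2, e3, e4, e5, e6]
    ext u y
    simp only [ContinuousLinearMap.zero_apply]
    exact hg_nondeg _ (fun z => Szero u y z)
  have hconst : ∀ x : V, fderiv ℝ v x = fderiv ℝ v 0 :=
    fun x => is_const_of_fderiv_eq_zero hAd hB0 x 0
  set A0 := fderiv ℝ v 0 with hA0def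
  have hw0 : ∀ x : V, HasFDerivAt (fun x => v x - A0 x) (0 : V →L[ℝ] V) x := by
    intro x
    have h := (hvd x).hasFDerivAt.sub A0.hasFDerivAt
    rwa [hconst x, sub_self] at h
  have haff : ∀ x : V, v x = v 0 + A0 x := by
    intro x
    have h := is_const_of_fderiv_eq_zero (fun y => (hw0 y).differentiableAt)
      (fun y => (hw0 y).fderiv) x 0
    simp only [map_zero, sub_zero] at h
    exact sub_eq_iff_eq_add.mp h
  refine ⟨hconst, haff, ?_⟩
  intro x₀ h0
  have hA0 : fderiv ℝ v x₀ = A0 := hconst x₀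
  have hv' : ∀ x : V, v x = A0 (x - x₀) := by
    intro x
    have h2 : v 0 + A0 x₀ = 0 := by rw [← haff x₀, h0]
    have h3 : v 0 = -(A0 x₀) := eq_neg_of_add_eq_zero_left h2
    rw [haff x, h3, map_sub]
    abel
  constructor
  · ext x
    simp only [Set.mem_setOf_eq, Set.mem_image, SetLike.mem_coe, LinearMap.mem_ker]
    constructor
    · intro hx
      refine ⟨x - x₀, ?_, by abel⟩
      rw [hA0, ContinuousLinearMap.coe_coe, ← hv' x, hx]
    · rintro ⟨y, hy, rfl⟩
      rw [hv' (x₀ + y)]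
      rw [hA0] at hy
      simpa using hy
  · have hsk : ∀ y z : V, g ((fderiv ℝ v x₀ : V →ₗ[ℝ] V) y) z
        = - g y ((fderiv ℝ v x₀ : V →ₗ[ℝ] V) z) := by
      intro y z
      exact hskew x₀ y z
    have h := even_rank_of_skew g hg_symm hg_nondeg
      ((fderiv ℝ v x₀ : V →L[ℝ] V) : V →ₗ[ℝ] V) hsk
    exact h
end

section
/- Let (V,g) be a pseudo-Euclidean space of dimension n ≥ 3, let v be a smooth conformal vector field on (V,g) with smooth conformal factor φ : V → ℝ and g-gradient ∇φ, and let x₀ ∈ V with v(x₀) = 0. Assume that either φ(x₀) ≠ 0, or else φ(x₀) = 0 and ∇φ(x₀) ∉ Dv_{x₀}(V). Then there exists ε > 0 such that for every x ∈ V with ‖x − x₀‖ < ε one has v(x) = 0 if and only if all three conditions hold: Dv_{x₀}(x − x₀) = 0, dφ_{x₀}(x − x₀) = 0, and g(x − x₀, x − x₀) = 0. (That is, near x₀ the zero set of v is the intersection of the translated null cone with the translated simultaneous kernel of Dv_{x₀} and dφ_{x₀}.) -/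
open Module

section Aux

variable {V : Type*} [NormedAddCommGroup V] [NormedSpace ℝ V] [FiniteDimensional ℝ V]

theorem lemC' (L : V →L[ℝ] V) :
    ∃ δ > (0:ℝ), ∀ t : ℝ, |t| < δ → t ≠ 0 → ∀ m : V, L m = t • m → m = 0 := by
  set E : Module.End ℝ V := (L : V →ₗ[ℝ] V)
  have hfin : Set.Finite {t : ℝ | E.HasEigenvalue t ∧ t ≠ 0} :=
    (Module.End.finite_hasEigenvalue E).subset (fun t ht => ht.1)
  have hcl : IsClosed {t : ℝ | E.HasEigenvalue t ∧ t ≠ 0} := hfin.isClosed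
  have h0 : (0:ℝ) ∈ {t : ℝ | E.HasEigenvalue t ∧ t ≠ 0}ᶜ := by simp
  obtain ⟨δ, hδpos, hball⟩ := Metric.isOpen_iff.1 hcl.isOpen_compl 0 h0
  refine ⟨δ, hδpos, fun t ht htne m hm => ?_⟩
  by_contra hmne
  have heig : E.HasEigenvalue t :=
    Module.End.hasEigenvalue_of_hasEigenvector ⟨Module.End.mem_eigenspace_iff.2 hm, hmne⟩
  have : t ∈ {t : ℝ | E.HasEigenvalue t ∧ t ≠ 0}ᶜ := by
    apply hball; simpa [Real.dist_eq] using ht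
  exact this ⟨heig, htne⟩

theorem lemA' (hn : 3 ≤ Module.finrank ℝ V)
    (g : V →ₗ[ℝ] V →ₗ[ℝ] ℝ)
    (hg_symm : ∀ x y : V, g x y = g y x)
    (hg_nondeg : ∀ x : V, (∀ y : V, g x y = 0) → x = 0)
    (Ψ : V →L[ℝ] V →L[ℝ] ℝ)
    (hid : ∀ u w y z : V,
      Ψ u y * g w z - Ψ u z * g w y = Ψ w y * g u z - Ψ w z * g u y) :
    ∀ u w : V, Ψ u w = 0 := by
  classical
  have hinj : Function.Injective g := by
    intro a b hab
    have h0 : ∀ y, g (a - b) y = 0 := by intro y; simp [map_sub, hab]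
    exact sub_eq_zero.1 (hg_nondeg _ h0)
  have hsurj : Function.Surjective g :=
    (LinearMap.injective_iff_surjective_of_finrank_eq_finrank
      (Subspace.dual_finrank_eq (K := ℝ) (V := V)).symm).1 hinj
  set n := Module.finrank ℝ V with hn_def
  let B : Basis (Fin n) ℝ V := Module.finBasis ℝ V
  choose f hf using fun i => hsurj (B.coord i)
  have hdelta : ∀ i j, g (B i) (f j) = if i = j then 1 else 0 := by
    intro i j
    rw [hg_symm, hf j, Basis.coord_apply, Basis.repr_self_apply]
  have hexp1 : ∀ y : V, ∑ i, g y (f i) • B i = y := by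
    intro y
    have : ∀ i, g y (f i) = B.repr y i := by
      intro i; rw [hg_symm, hf i, Basis.coord_apply]
    simp_rw [this]
    exact B.sum_repr y
  have hexp2 : ∀ w : V, ∑ i, g (B i) w • f i = w := by
    intro w
    apply hinj
    rw [map_sum]
    have : ∀ i, g (g (B i) w • f i) = g w (B i) • B.coord i := by
      intro i; rw [map_smul, hf i, hg_symm]
    simp_rw [this]
    exact B.sum_dual_apply_smul_coord (g w)
  have hΨ1 : ∀ (c : Fin n → ℝ) (x : Fin n → V) (y : V),
      Ψ (∑ i, c i • x i) y = ∑ i, c i * Ψ (x i) y := by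
    intro c x y
    rw [map_sum]
    simp [ContinuousLinearMap.sum_apply]
  have hΨ2 : ∀ (c : Fin n → ℝ) (x : V) (y : Fin n → V),
      Ψ x (∑ i, c i • y i) = ∑ i, c i * Ψ x (y i) := by
    intro c x y
    rw [map_sum]
    simp
  set T : ℝ := ∑ i, Ψ (B i) (f i) with hT_def
  have step1 : ∀ w y : V, ((n : ℝ) - 2) * Ψ w y = -(T * g w y) := by
    intro w y
    have hsum := Finset.sum_congr rfl (fun i (_ : i ∈ Finset.univ) => hid (B i) w y (f i))
    have hS1 : ∑ i, Ψ (B i) y * g w (f i) = Ψ w y := by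
      calc ∑ i, Ψ (B i) y * g w (f i) = ∑ i, g w (f i) * Ψ (B i) y := by
            simp_rw [mul_comm]
        _ = Ψ (∑ i, g w (f i) • B i) y := (hΨ1 _ _ _).symm
        _ = Ψ w y := by rw [hexp1]
    have hS2 : ∑ i, Ψ (B i) (f i) * g w y = T * g w y := by
      rw [← Finset.sum_mul]
    have hS3 : ∑ i, Ψ w y * g (B i) (f i) = (n : ℝ) * Ψ w y := by
      have : ∀ i : Fin n, g (B i) (f i) = 1 := by intro i; simp [hdelta]
      simp [this, mul_comm]
    have hS4 : ∑ i, Ψ w (f i) * g (B i) y = Ψ w y := by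
      calc ∑ i, Ψ w (f i) * g (B i) y = ∑ i, g (B i) y * Ψ w (f i) := by
            simp_rw [mul_comm]
        _ = Ψ w (∑ i, g (B i) y • f i) := (hΨ2 _ _ _).symm
        _ = Ψ w y := by rw [hexp2]
    rw [Finset.sum_sub_distrib, Finset.sum_sub_distrib, hS1, hS2, hS3, hS4] at hsum
    ring_nf
    ring_nf at hsum
    linarith
  have hT : T = 0 := by
    have hsum := Finset.sum_congr rfl
      (fun i (_ : i ∈ Finset.univ) => step1 (B i) (f i))
    rw [← Finset.mul_sum, ← hT_def] at hsum
    have hgsum : ∑ i, g (B i) (f i) = (n : ℝ) := by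
      have : ∀ i : Fin n, g (B i) (f i) = 1 := by intro i; simp [hdelta]
      simp [this]
    have h2 : ∑ i, -(T * g (B i) (f i)) = -(T * (n : ℝ)) := by
      rw [Finset.sum_neg_distrib, ← Finset.mul_sum, hgsum]
    rw [h2] at hsum
    have hn3 : (3 : ℝ) ≤ (n : ℝ) := by exact_mod_cast hn
    nlinarith [hsum]
  intro u w
  have h1 := step1 u w
  rw [hT] at h1
  have hn3 : (3 : ℝ) ≤ (n : ℝ) := by exact_mod_cast hn
  have h2 : ((n : ℝ) - 2) * Ψ u w = 0 := by linarith [h1]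
  have hne : ((n : ℝ) - 2) ≠ 0 := by linarith
  exact (mul_eq_zero.1 h2).resolve_left hne

end Aux

set_option maxHeartbeats 2000000 in
theorem lemB' {V : Type*} [NormedAddCommGroup V] [NormedSpace ℝ V] [FiniteDimensional ℝ V]
    (hn : 3 ≤ Module.finrank ℝ V)
    (g : V →ₗ[ℝ] V →ₗ[ℝ] ℝ)
    (hg_symm : ∀ x y : V, g x y = g y x)
    (hg_nondeg : ∀ x : V, (∀ y : V, g x y = 0) → x = 0)
    (v : V → V) (hv : ContDiff ℝ (⊤ : ℕ∞) v)
    (φ : V → ℝ) (hφ : ContDiff ℝ (⊤ : ℕ∞) φ)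
    (hconf : ∀ x y z : V,
      g (fderiv ℝ v x y) z + g y (fderiv ℝ v x z) = φ x * g y z)
    (gradφ : V → V)
    (hgrad : ∀ x w : V, g (gradφ x) w = fderiv ℝ φ x w)
    (x₀ : V) (hx₀ : v x₀ = 0) :
    ∀ x : V, v x = fderiv ℝ v x₀ (x - x₀)
      + (2⁻¹ * fderiv ℝ φ x₀ (x - x₀)) • (x - x₀)
      - (4⁻¹ * g (x - x₀) (x - x₀)) • gradφ x₀ := by
  classical
  -- notation
  set D1 : V → (V →L[ℝ] V) := fderiv ℝ v with hD1_def
  set D2 : V → (V →L[ℝ] (V →L[ℝ] V)) := fderiv ℝ D1 with hD2_def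
  set ψf : V → (V →L[ℝ] ℝ) := fderiv ℝ φ with hψf_def
  set Pf : V → (V →L[ℝ] (V →L[ℝ] ℝ)) := fderiv ℝ ψf with hPf_def
  have hvdiff : Differentiable ℝ v := hv.differentiable (by simp)
  have hD1sm : ContDiff ℝ (⊤ : ℕ∞) D1 := hv.fderiv_right (by simp)
  have hD1diff : Differentiable ℝ D1 := hD1sm.differentiable (by simp)
  have hD2sm : ContDiff ℝ (⊤ : ℕ∞) D2 := hD1sm.fderiv_right (by simp)
  have hD2diff : Differentiable ℝ D2 := hD2sm.differentiable (by simp)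
  have hφdiff : Differentiable ℝ φ := hφ.differentiable (by simp)
  have hψsm : ContDiff ℝ (⊤ : ℕ∞) ψf := hφ.fderiv_right (by simp)
  have hψdiff : Differentiable ℝ ψf := hψsm.differentiable (by simp)
  -- second-derivative conformal identity
  have key2 : ∀ x w y z : V,
      g (D2 x w y) z + g y (D2 x w z) = ψf x w * g y z := by
    intro x w y z
    set gz : V →L[ℝ] ℝ := LinearMap.toContinuousLinearMap (g.flip z) with hgz
    set gy : V →L[ℝ] ℝ := LinearMap.toContinuousLinearMap (g y) with hgy
    have h1 : HasFDerivAt (fun x' => g (D1 x' y) z)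
        (gz.comp ((D1 x).comp (0 : V →L[ℝ] V) + (D2 x).flip y)) x :=
      gz.hasFDerivAt.comp x ((hD1diff x).hasFDerivAt.clm_apply (hasFDerivAt_const y x))
    have h2 : HasFDerivAt (fun x' => g y (D1 x' z))
        (gy.comp ((D1 x).comp (0 : V →L[ℝ] V) + (D2 x).flip z)) x :=
      gy.hasFDerivAt.comp x ((hD1diff x).hasFDerivAt.clm_apply (hasFDerivAt_const z x))
    have hL : HasFDerivAt (fun x' => φ x' * g y z)
        (gz.comp ((D1 x).comp (0 : V →L[ℝ] V) + (D2 x).flip y)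
          + gy.comp ((D1 x).comp (0 : V →L[ℝ] V) + (D2 x).flip z)) x := by
      have h12 := h1.add h2
      have hfe : (fun x' => g (D1 x' y) z + g y (D1 x' z))
          = fun x' => φ x' * g y z := funext fun x' => hconf x' y z
      have h12' : HasFDerivAt (fun x' => g (D1 x' y) z + g y (D1 x' z)) _ x := h12
      rwa [hfe] at h12'
    have hR : HasFDerivAt (fun x' => φ x' * g y z)
        (g y z • ψf x) x := (hφdiff x).hasFDerivAt.mul_const _
    have huniq := hL.unique hR
    have happ := congrArg (fun (T : V →L[ℝ] ℝ) => T w) huniq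
    simpa [gz, gy, ContinuousLinearMap.comp_apply, ContinuousLinearMap.add_apply,
      ContinuousLinearMap.flip_apply, smul_eq_mul, mul_comm] using happ
  -- symmetry of D2 in its two vector slots
  have hsym2 : ∀ (x a c : V), D2 x a c = D2 x c a := fun x a c =>
    second_derivative_symmetric (fun y => (hvdiff y).hasFDerivAt)
      ((hD1diff x).hasFDerivAt) a c
  have key2' : ∀ x w y z : V,
      2 * g (D2 x w y) z = ψf x w * g y z + ψf x y * g w z - ψf x z * g w y := by
    intro x w y z
    have k1 := key2 x w y z
    have k2 := key2 x y z w
    have k3 := key2 x z w y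
    rw [hg_symm y (D2 x w z)] at k1
    rw [hg_symm z (D2 x y w), hsym2 x y w, hg_symm z w] at k2
    rw [hsym2 x z w, hg_symm w (D2 x z y), hsym2 x z y] at k3
    linarith [k1, k2, k3]
  -- third derivative identity
  have key3 : ∀ x u w y z : V,
      2 * g (fderiv ℝ D2 x u w y) z
        = Pf x u w * g y z + Pf x u y * g w z - Pf x u z * g w y := by
    intro x u w y z
    set D3 := fderiv ℝ D2 with hD3_def
    set gz : V →L[ℝ] ℝ := LinearMap.toContinuousLinearMap (g.flip z) with hgz
    have hin1 : HasFDerivAt (fun x' => D2 x' w)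
        ((D2 x).comp (0 : V →L[ℝ] V) + (D3 x).flip w) x :=
      (hD2diff x).hasFDerivAt.clm_apply (hasFDerivAt_const w x)
    have hin2 : HasFDerivAt (fun x' => D2 x' w y)
        ((D2 x w).comp (0 : V →L[ℝ] V)
          + ((D2 x).comp (0 : V →L[ℝ] V) + (D3 x).flip w).flip y) x :=
      hin1.clm_apply (hasFDerivAt_const y x)
    have hL : HasFDerivAt (fun x' => 2 * g (D2 x' w y) z)
        ((2:ℝ) • (gz.comp ((D2 x w).comp (0 : V →L[ℝ] V)
          + ((D2 x).comp (0 : V →L[ℝ] V) + (D3 x).flip w).flip y))) x :=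
      (gz.hasFDerivAt.comp x hin2).const_mul 2
    have ht1 : HasFDerivAt (fun x' => ψf x' w * g y z)
        (g y z • ((ψf x).comp (0 : V →L[ℝ] V) + (Pf x).flip w)) x :=
      ((hψdiff x).hasFDerivAt.clm_apply (hasFDerivAt_const w x)).mul_const _
    have ht2 : HasFDerivAt (fun x' => ψf x' y * g w z)
        (g w z • ((ψf x).comp (0 : V →L[ℝ] V) + (Pf x).flip y)) x :=
      ((hψdiff x).hasFDerivAt.clm_apply (hasFDerivAt_const y x)).mul_const _
    have ht3 : HasFDerivAt (fun x' => ψf x' z * g w y)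
        (g w y • ((ψf x).comp (0 : V →L[ℝ] V) + (Pf x).flip z)) x :=
      ((hψdiff x).hasFDerivAt.clm_apply (hasFDerivAt_const z x)).mul_const _
    have hR : HasFDerivAt (fun x' => ψf x' w * g y z + ψf x' y * g w z - ψf x' z * g w y)
        (g y z • ((ψf x).comp (0 : V →L[ℝ] V) + (Pf x).flip w)
          + g w z • ((ψf x).comp (0 : V →L[ℝ] V) + (Pf x).flip y)
          - g w y • ((ψf x).comp (0 : V →L[ℝ] V) + (Pf x).flip z)) x :=
      (ht1.add ht2).sub ht3
    have hfe : (fun x' => 2 * g (D2 x' w y) z)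
        = fun x' => ψf x' w * g y z + ψf x' y * g w z - ψf x' z * g w y :=
      funext fun x' => key2' x' w y z
    rw [hfe] at hL
    have huniq := hL.unique hR
    have happ := congrArg (fun (T : V →L[ℝ] ℝ) => T u) huniq
    simp only [ContinuousLinearMap.smul_apply, ContinuousLinearMap.comp_apply,
      ContinuousLinearMap.add_apply, ContinuousLinearMap.sub_apply,
      ContinuousLinearMap.flip_apply, ContinuousLinearMap.zero_apply, map_zero,
      zero_add, add_zero, smul_eq_mul, gz,
      LinearMap.coe_toContinuousLinearMap', LinearMap.flip_apply] at happ
    linear_combination happ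
  -- symmetry of third derivatives
  have hsym3 : ∀ (x a c : V), fderiv ℝ D2 x a c = fderiv ℝ D2 x c a := fun x a c =>
    second_derivative_symmetric (fun y => (hD1diff y).hasFDerivAt)
      ((hD2diff x).hasFDerivAt) a c
  have hsymP : ∀ (x a c : V), Pf x a c = Pf x c a := fun x a c =>
    second_derivative_symmetric (fun y => (hφdiff y).hasFDerivAt)
      ((hψdiff x).hasFDerivAt) a c
  -- second derivative of φ vanishes
  have hΨ0 : ∀ x u w : V, Pf x u w = 0 := by
    intro x
    apply lemA' hn g hg_symm hg_nondeg (Pf x)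
    intro u w y z
    have e1 := key3 x u w y z
    have e2 := key3 x w u y z
    have e3 : fderiv ℝ D2 x u w = fderiv ℝ D2 x w u := hsym3 x u w
    rw [e3] at e1
    have e4 : Pf x u w = Pf x w u := hsymP x u w
    rw [e4] at e1
    linarith [e1, e2]
  -- ψf is constant
  have hψconst : ∀ x : V, ψf x = ψf x₀ := by
    have h0 : ∀ x, fderiv ℝ ψf x = 0 := by
      intro x
      exact ContinuousLinearMap.ext fun u => ContinuousLinearMap.ext fun w => hΨ0 x u w
    exact fun x => is_const_of_fderiv_eq_zero hψdiff h0 x x₀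
  set ψ : V →L[ℝ] ℝ := ψf x₀ with hψ_def
  set b : V := gradφ x₀ with hb_def
  set L₀ : V →L[ℝ] V := D1 x₀ with hL₀_def
  have hgb : ∀ w : V, g b w = ψ w := fun w => hgrad x₀ w
  -- explicit formula for D2
  have hD2form : ∀ x w y : V,
      D2 x w y = (2⁻¹ * ψ w) • y + (2⁻¹ * ψ y) • w - (2⁻¹ * g w y) • b := by
    intro x w y
    have hz : ∀ z : V,
        g (D2 x w y - ((2⁻¹ * ψ w) • y + (2⁻¹ * ψ y) • w - (2⁻¹ * g w y) • b)) z = 0 := by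
      intro z
      have hk := key2' x w y z
      rw [hψconst x] at hk
      have hbz : g b z = ψ z := hgb z
      simp only [map_sub, map_add, map_smul, LinearMap.sub_apply, LinearMap.add_apply,
        LinearMap.smul_apply, smul_eq_mul]
      rw [hbz]
      linarith [hk]
    exact sub_eq_zero.1 (hg_nondeg _ hz)
  -- continuous bilinear versions
  let glm : V →ₗ[ℝ] (V →L[ℝ] ℝ) :=
    { toFun := fun u => LinearMap.toContinuousLinearMap (g u)
      map_add' := by intro a c; ext w; simp
      map_smul' := by intro c a; ext w; simp }
  let gc : V →L[ℝ] V →L[ℝ] ℝ := LinearMap.toContinuousLinearMap glm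
  have hgc : ∀ u w : V, gc u w = g u w := by
    intro u w; simp [gc, glm]
  let Rlin : V →ₗ[ℝ] V →ₗ[ℝ] V := LinearMap.mk₂ ℝ
    (fun h w => (2⁻¹ * ψ h) • w + (2⁻¹ * ψ w) • h - (2⁻¹ * g h w) • b)
    (by intro m₁ m₂ n; simp [map_add, mul_add, add_smul, smul_add]; module)
    (by intro c m n; simp [map_smul, smul_smul, smul_add, smul_sub, mul_assoc]; module)
    (by intro m n₁ n₂; simp [map_add, mul_add, add_smul, smul_add]; module)
    (by intro c m n; simp [map_smul, smul_smul, smul_add, smul_sub, mul_assoc]; module)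
  let Rlm : V →ₗ[ℝ] (V →L[ℝ] V) :=
    { toFun := fun h => LinearMap.toContinuousLinearMap (Rlin h)
      map_add' := by intro a c; ext w; simp [Rlin]
      map_smul' := by intro c a; ext w; simp [Rlin]  }
  let R2 : V →L[ℝ] (V →L[ℝ] V) := LinearMap.toContinuousLinearMap Rlm
  have hR2 : ∀ h w : V, R2 h w = (2⁻¹ * ψ h) • w + (2⁻¹ * ψ w) • h - (2⁻¹ * g h w) • b := by
    intro h w; simp [R2, Rlm, Rlin]
  -- D2 is constant equal to R2
  have hD2eq : ∀ x : V, D2 x = R2 := by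
    intro x
    ext w y
    rw [hD2form x w y, hR2 w y]
  -- formula for D1
  have hD1form : ∀ x : V, D1 x = L₀ + R2 (x - x₀) := by
    have hXd : ∀ x : V, HasFDerivAt (fun x' => D1 x' - R2 (x' - x₀)) (0 : V →L[ℝ] (V →L[ℝ] V)) x := by
      intro x
      have h1 : HasFDerivAt (fun x' => R2 (x' - x₀)) (R2.comp (ContinuousLinearMap.id ℝ V)) x :=
        R2.hasFDerivAt.comp x ((hasFDerivAt_id x).sub_const x₀)
      have h2 := (hD1diff x).hasFDerivAt.sub h1
      have h3 : D2 x - R2.comp (ContinuousLinearMap.id ℝ V) = 0 := by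
        ext w y
        simp [hD2eq x]
      rwa [h3] at h2
    have hconst := is_const_of_fderiv_eq_zero (𝕜 := ℝ)
      (f := fun x' => D1 x' - R2 (x' - x₀))
      (fun x => (hXd x).differentiableAt) (fun x => (hXd x).fderiv)
    intro x
    have := hconst x x₀
    simp only [sub_self, map_zero, sub_zero] at this
    rw [sub_eq_iff_eq_add] at this
    rw [this]
  -- formula for v
  have hvform : ∀ x : V, v x = L₀ (x - x₀) + (2⁻¹ * ψ (x - x₀)) • (x - x₀)
      - (4⁻¹ * g (x - x₀) (x - x₀)) • b := by
    set P : V → V := fun x => L₀ (x - x₀) + (2⁻¹ * ψ (x - x₀)) • (x - x₀)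
      - (4⁻¹ * gc (x - x₀) (x - x₀)) • b with hP_def
    have hPd : ∀ x : V, HasFDerivAt P (D1 x) x := by
      intro x
      set m : V := x - x₀ with hm_def
      have hm : HasFDerivAt (fun x' => x' - x₀) (ContinuousLinearMap.id ℝ V) x :=
        (hasFDerivAt_id x).sub_const x₀
      have hp1 : HasFDerivAt (fun x' => L₀ (x' - x₀))
          (L₀.comp (ContinuousLinearMap.id ℝ V)) x := L₀.hasFDerivAt.comp x hm
      have hs : HasFDerivAt (fun x' => 2⁻¹ * ψ (x' - x₀))
          ((2⁻¹:ℝ) • (ψ.comp (ContinuousLinearMap.id ℝ V))) x :=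
        (ψ.hasFDerivAt.comp x hm).const_mul 2⁻¹
      have hp2 := hs.smul hm
      have hq1 : HasFDerivAt (fun x' => gc (x' - x₀))
          (gc.comp (ContinuousLinearMap.id ℝ V)) x := gc.hasFDerivAt.comp x hm
      have hq2 := hq1.clm_apply hm
      have hq3 := (hq2.const_mul (4⁻¹:ℝ)).smul_const b
      have hP' := (hp1.add hp2).sub hq3
      have heq : (L₀.comp (ContinuousLinearMap.id ℝ V)
          + ((2⁻¹ * ψ m) • ContinuousLinearMap.id ℝ V
            + ((2⁻¹:ℝ) • (ψ.comp (ContinuousLinearMap.id ℝ V))).smulRight m)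
          - ((4⁻¹:ℝ) • ((gc m).comp (ContinuousLinearMap.id ℝ V)
            + (gc.comp (ContinuousLinearMap.id ℝ V)).flip m)).smulRight b)
          = D1 x := by
        rw [hD1form x]
        ext w
        have hsymm_wm : g w m = g m w := hg_symm w m
        simp only [ContinuousLinearMap.add_apply, ContinuousLinearMap.sub_apply,
          ContinuousLinearMap.comp_apply, ContinuousLinearMap.coe_id', id_eq,
          ContinuousLinearMap.smul_apply, ContinuousLinearMap.smulRight_apply,
          ContinuousLinearMap.flip_apply, smul_eq_mul, hR2, hgc, ← hm_def]
        rw [hsymm_wm]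
        module
      rw [heq] at hP'
      exact hP'
    have hYd : ∀ x : V, HasFDerivAt (fun x' => v x' - P x') (0 : V →L[ℝ] V) x := by
      intro x
      have := (hvdiff x).hasFDerivAt.sub (hPd x)
      exact this.congr_fderiv (by simp [hD1_def])
    have hconst := is_const_of_fderiv_eq_zero (𝕜 := ℝ) (f := fun x' => v x' - P x')
      (fun x => (hYd x).differentiableAt) (fun x => (hYd x).fderiv)
    intro x
    have h1 := hconst x x₀
    have hP₀ : P x₀ = 0 := by simp [hP_def]
    simp only [hx₀, hP₀, sub_zero] at h1
    have h2 : v x = P x := sub_eq_zero.1 h1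
    rw [h2, hP_def]
    simp [hgc]
  exact hvform

set_option maxHeartbeats 1000000 in
/-- Local structure of the zero set of a smooth conformal vector
field near an essential zero `x₀` (i.e. `φ(x₀) ≠ 0`, or `φ(x₀) = 0` and
`∇φ(x₀) ∉ Dv_{x₀}(V)`): near `x₀`, `v(x) = 0` iff `Dv_{x₀}(x − x₀) = 0`,
`dφ_{x₀}(x − x₀) = 0` and `g(x − x₀, x − x₀) = 0`. -/
theorem stmt16
    {V : Type*} [NormedAddCommGroup V] [NormedSpace ℝ V] [FiniteDimensional ℝ V]
    (hn : 3 ≤ Module.finrank ℝ V)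
    (g : V →ₗ[ℝ] V →ₗ[ℝ] ℝ)
    (hg_symm : ∀ x y : V, g x y = g y x)
    (hg_nondeg : ∀ x : V, (∀ y : V, g x y = 0) → x = 0)
    (v : V → V) (hv : ContDiff ℝ (⊤ : ℕ∞) v)
    (φ : V → ℝ) (hφ : ContDiff ℝ (⊤ : ℕ∞) φ)
    (hconf : ∀ x y z : V,
      g (fderiv ℝ v x y) z + g y (fderiv ℝ v x z) = φ x * g y z)
    (gradφ : V → V)
    (hgrad : ∀ x w : V, g (gradφ x) w = fderiv ℝ φ x w)
    (x₀ : V) (hx₀ : v x₀ = 0)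
    (hess : φ x₀ ≠ 0 ∨ (φ x₀ = 0 ∧ gradφ x₀ ∉ LinearMap.range (fderiv ℝ v x₀ : V →ₗ[ℝ] V))) :
    ∃ ε > (0 : ℝ), ∀ x : V, ‖x - x₀‖ < ε →
      (v x = 0 ↔
        fderiv ℝ v x₀ (x - x₀) = 0 ∧
        fderiv ℝ φ x₀ (x - x₀) = 0 ∧
        g (x - x₀) (x - x₀) = 0) := by
  classical
  have hvform := lemB' hn g hg_symm hg_nondeg v hv φ hφ hconf gradφ hgrad x₀ hx₀
  set L₀ : V →L[ℝ] V := fderiv ℝ v x₀ with hL₀_def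
  set ψ : V →L[ℝ] ℝ := fderiv ℝ φ x₀ with hψ_def
  set b : V := gradφ x₀ with hb_def
  have hgb : ∀ w : V, g b w = ψ w := fun w => hgrad x₀ w
  clear hv hφ hgrad hx₀
  -- zero-set equation at points where v vanishes
  have hz : ∀ x : V, v x = 0 →
      L₀ (x - x₀) + (2⁻¹ * ψ (x - x₀)) • (x - x₀)
        - (4⁻¹ * g (x - x₀) (x - x₀)) • b = 0 := by
    intro x hvx
    rw [← hvform x]
    exact hvx
  -- backward direction, valid everywhere
  have bwd : ∀ x : V, L₀ (x - x₀) = 0 → ψ (x - x₀) = 0 → g (x - x₀) (x - x₀) = 0 →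
      v x = 0 := by
    intro x h1 h2 h3
    rw [hvform x, h1, h2, h3]
    simp
  -- the factored scalar equation, for an abstract displacement m
  have factored : ∀ m : V,
      L₀ m + (2⁻¹ * ψ m) • m - (4⁻¹ * g m m) • b = 0 →
      g m m * (2⁻¹ * φ x₀ + 4⁻¹ * ψ m) = 0 := by
    intro m h0
    have eqA := congrArg (fun u : V => g u m) h0
    simp only [map_add, map_sub, map_smul, LinearMap.add_apply, LinearMap.sub_apply,
      LinearMap.smul_apply, LinearMap.zero_apply, map_zero, smul_eq_mul] at eqA
    rw [hgb m] at eqA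
    have eq2 : 2 * g (L₀ m) m = φ x₀ * g m m := by
      have hc := hconf x₀ m m
      rw [hg_symm m (L₀ m)] at hc
      linarith
    linear_combination eqA - 2⁻¹ * eq2
  -- eigenvalue gap
  obtain ⟨δ, hδpos, hδ⟩ := lemC' L₀
  set C : ℝ := ‖ψ‖ with hC_def
  have hCpos : (0:ℝ) < C + 1 := by positivity
  -- common ending once the null-cone condition is known
  have common : ∀ m : V, ‖m‖ < δ / (C + 1) →
      L₀ m + (2⁻¹ * ψ m) • m - (4⁻¹ * g m m) • b = 0 → g m m = 0 →
      L₀ m = 0 ∧ ψ m = 0 := by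
    intro m hx h0 hG
    rw [hG, mul_zero, zero_smul, sub_zero] at h0
    have hLm : L₀ m = (-(2⁻¹ * ψ m)) • m := by
      rw [neg_smul]
      exact eq_neg_of_add_eq_zero_left h0
    have hψm : |ψ m| ≤ C * ‖m‖ := ψ.le_opNorm m
    by_cases hψm0 : ψ m = 0
    · refine ⟨?_, hψm0⟩
      rw [hLm, hψm0]
      simp
    · exfalso
      have htne : -(2⁻¹ * ψ m) ≠ 0 := by
        simp only [neg_ne_zero]
        exact mul_ne_zero (by norm_num) hψm0
      have htlt : |(-(2⁻¹ * ψ m))| < δ := by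
        rw [abs_neg, abs_mul]
        have h2 : C * ‖m‖ < δ := by
          have h3 : (C + 1) * ‖m‖ < δ := by
            rw [← lt_div_iff₀' hCpos]
            exact hx
          nlinarith [norm_nonneg m]
        have h4 : |(2:ℝ)⁻¹| = 2⁻¹ := by norm_num
        rw [h4]
        nlinarith [abs_nonneg (ψ m), hψm]
      have hm0 : m = 0 := hδ _ htlt htne m hLm
      rw [hm0] at hψm0
      simp at hψm0
  -- the not-in-range argument for the second case
  have notrange : b ∉ LinearMap.range (L₀ : V →ₗ[ℝ] V) → ∀ m : V,
      L₀ m + (2⁻¹ * ψ m) • m - (4⁻¹ * g m m) • b = 0 → ψ m = 0 → g m m = 0 := by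
    intro hbr m h0 hψm0
    by_contra hGne
    rw [hψm0, mul_zero, zero_smul, add_zero] at h0
    have hLb : L₀ m = (4⁻¹ * g m m) • b := sub_eq_zero.1 h0
    have hcoefne : (4⁻¹ * g m m : ℝ) ≠ 0 :=
      mul_ne_zero (by norm_num) hGne
    apply hbr
    refine LinearMap.mem_range.2 ⟨(4⁻¹ * g m m)⁻¹ • m, ?_⟩
    rw [ContinuousLinearMap.coe_coe, map_smul, hLb, smul_smul, inv_mul_cancel₀ hcoefne, one_smul]
  clear hvform hconf
  rcases hess with hφ0 | ⟨hφ0, hbr⟩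
  · -- essential case φ(x₀) ≠ 0
    refine ⟨min (δ / (C + 1)) (|φ x₀| / (C + 1)), lt_min (div_pos hδpos hCpos)
      (div_pos (abs_pos.2 hφ0) hCpos), ?_⟩
    intro x hx
    have hx1 : ‖x - x₀‖ < δ / (C + 1) := lt_of_lt_of_le hx (min_le_left _ _)
    have hx2 : ‖x - x₀‖ < |φ x₀| / (C + 1) := lt_of_lt_of_le hx (min_le_right _ _)
    constructor
    · intro hvx
      have h0 := hz x hvx
      have hψm : |ψ (x - x₀)| ≤ C * ‖x - x₀‖ := ψ.le_opNorm (x - x₀)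
      have hCm : C * ‖x - x₀‖ < |φ x₀| := by
        have h3 : (C + 1) * ‖x - x₀‖ < |φ x₀| := by
          rw [← lt_div_iff₀' hCpos]
          exact hx2
        nlinarith [norm_nonneg (x - x₀)]
      have hne : 2⁻¹ * φ x₀ + 4⁻¹ * ψ (x - x₀) ≠ 0 := by
        intro hc
        have h4 : φ x₀ = -(2⁻¹ * ψ (x - x₀)) := by linarith
        have h5 : |φ x₀| ≤ |ψ (x - x₀)| := by
          rw [h4, abs_neg, abs_mul]
          have h6 : |(2:ℝ)⁻¹| = 2⁻¹ := by norm_num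
          rw [h6]
          nlinarith [abs_nonneg (ψ (x - x₀))]
        nlinarith [hψm]
      have hG : g (x - x₀) (x - x₀) = 0 :=
        (mul_eq_zero.1 (factored _ h0)).resolve_right hne
      obtain ⟨hL, hψ0⟩ := common _ hx1 h0 hG
      exact ⟨hL, hψ0, hG⟩
    · rintro ⟨h1, h2, h3⟩
      exact bwd x h1 h2 h3
  · -- essential case φ(x₀) = 0, gradient not in range
    refine ⟨δ / (C + 1), div_pos hδpos hCpos, ?_⟩
    intro x hx
    constructor
    · intro hvx
      have h0 := hz x hvx
      have hfac := factored _ h0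
      rw [hφ0] at hfac
      have hG : g (x - x₀) (x - x₀) = 0 := by
        rcases mul_eq_zero.1 hfac with h | h
        · exact h
        · have hψm0 : ψ (x - x₀) = 0 := by linarith
          exact notrange hbr _ h0 hψm0
      obtain ⟨hL, hψ0⟩ := common _ hx h0 hG
      exact ⟨hL, hψ0, hG⟩
    · rintro ⟨h1, h2, h3⟩
      exact bwd x h1 h2 h3
end
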